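/- arXiv:2202.10632 — 3 statements merged into one kernel-verified Lean document; each statement's English description precedes it below -/
import Mathlib

section
/- Let F : ℝ^d → ℝ^{d+2} be an immersion with orthonormal normal frame {ν₁, ν₂}, complexified as m = ν₁ + i ν₂, connection coefficient A_α = ∂_α ν₁ · ν₂, and complex second fundamental form λ_{αβ}. Then the curvature of the normal connection satisfies the complex Ricci equation ∂_α A_β − ∂_β A_α = Im( λ_α^γ conj(λ_{βγ}) ), where indices are raised with the induced metric g. -/
noncomputable section

open Complex

/-- Euclidean dot product on `ℝ^n`. -/
def dotProd {n : ℕ} (u v : Fin n → ℝ) : ℝ := ∑ i, u i * v i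

/-- `∂_α G`. -/
def pderiv₁ {d : ℕ} (G : (Fin d → ℝ) → (Fin (d + 2) → ℝ)) (α : Fin d)
    (x : Fin d → ℝ) : Fin (d + 2) → ℝ :=
  fderiv ℝ G x (Pi.single α 1)

/-- `∂_α ∂_β G`. -/
def pderiv₂ {d : ℕ} (G : (Fin d → ℝ) → (Fin (d + 2) → ℝ)) (α β : Fin d)
    (x : Fin d → ℝ) : Fin (d + 2) → ℝ :=
  fderiv ℝ (fun y => pderiv₁ G β y) x (Pi.single α 1)

/-- Induced metric `g_{αβ}`. -/
def inducedMetric {d : ℕ} (G : (Fin d → ℝ) → (Fin (d + 2) → ℝ))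
    (x : Fin d → ℝ) : Matrix (Fin d) (Fin d) ℝ :=
  Matrix.of fun α β => dotProd (pderiv₁ G α x) (pderiv₁ G β x)

/-- Lowered Christoffel symbols `Γ_{αβ,σ} = ∂²_{αβ} G · ∂_σ G`. -/
def chrLow {d : ℕ} (G : (Fin d → ℝ) → (Fin (d + 2) → ℝ)) (α β σ : Fin d)
    (x : Fin d → ℝ) : ℝ :=
  dotProd (pderiv₂ G α β x) (pderiv₁ G σ x)

/-- Christoffel symbols `Γ^γ_{αβ} = g^{γσ} Γ_{αβ,σ}`. -/
def chrUp {d : ℕ} (G : (Fin d → ℝ) → (Fin (d + 2) → ℝ)) (γ α β : Fin d)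
    (x : Fin d → ℝ) : ℝ :=
  ∑ σ, (inducedMetric G x)⁻¹ γ σ * chrLow G α β σ x

/-- Riemann curvature tensor, in the form
`R_{σγαβ} = ∂_α Γ_{βγ,σ} − ∂_β Γ_{αγ,σ} + Γ^m_{βσ} Γ_{αγ,m} − Γ^m_{ασ} Γ_{βγ,m}`. -/
def riemann {d : ℕ} (G : (Fin d → ℝ) → (Fin (d + 2) → ℝ)) (σ γ α β : Fin d)
    (x : Fin d → ℝ) : ℝ :=
  fderiv ℝ (fun y => chrLow G β γ σ y) x (Pi.single α 1)
    - fderiv ℝ (fun y => chrLow G α γ σ y) x (Pi.single β 1)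
    + ∑ m, chrUp G m β σ x * chrLow G α γ m x
    - ∑ m, chrUp G m α σ x * chrLow G β γ m x

/-- Ricci curvature `Ric_{αβ} = g^{σγ} R_{γασβ}`. -/
def ricci {d : ℕ} (G : (Fin d → ℝ) → (Fin (d + 2) → ℝ)) (α β : Fin d)
    (x : Fin d → ℝ) : ℝ :=
  ∑ σ, ∑ γ, (inducedMetric G x)⁻¹ σ γ * riemann G γ α σ β x

/-- Complex second fundamental form `λ_{αβ}`. -/
def lamC {d : ℕ} (G ν₁ ν₂ : (Fin d → ℝ) → (Fin (d + 2) → ℝ)) (α β : Fin d)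
    (x : Fin d → ℝ) : ℂ :=
  (dotProd (pderiv₂ G α β x) (ν₁ x) : ℝ) + Complex.I * (dotProd (pderiv₂ G α β x) (ν₂ x) : ℝ)

/-- Raised complex second fundamental form `λ_β^α = g^{ασ} λ_{βσ}`. -/
def lamUp {d : ℕ} (G ν₁ ν₂ : (Fin d → ℝ) → (Fin (d + 2) → ℝ)) (β α : Fin d)
    (x : Fin d → ℝ) : ℂ :=
  ∑ σ, ((inducedMetric G x)⁻¹ α σ : ℝ) * lamC G ν₁ ν₂ β σ x

/-- Complex mean curvature `ψ = g^{αβ} λ_{αβ}`. -/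
def psiC {d : ℕ} (G ν₁ ν₂ : (Fin d → ℝ) → (Fin (d + 2) → ℝ)) (x : Fin d → ℝ) : ℂ :=
  ∑ α, ∑ β, ((inducedMetric G x)⁻¹ α β : ℝ) * lamC G ν₁ ν₂ α β x

/-- Connection coefficient `A_α = ∂_α ν₁ · ν₂` of the normal bundle. -/
def connA {d : ℕ} (ν₁ ν₂ : (Fin d → ℝ) → (Fin (d + 2) → ℝ)) (α : Fin d)
    (x : Fin d → ℝ) : ℝ :=
  dotProd (fderiv ℝ ν₁ x (Pi.single α 1)) (ν₂ x)

lemma dot_comm {n : ℕ} (u v : Fin n → ℝ) : dotProd u v = dotProd v u := by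
  simp [dotProd, mul_comm]

lemma dot_sub_right {n : ℕ} (u v w : Fin n → ℝ) :
    dotProd u (v - w) = dotProd u v - dotProd u w := by
  simp [dotProd, mul_sub, Finset.sum_sub_distrib]

lemma dot_sum_smul_left {n : ℕ} {ι : Type*} (s : Finset ι) (c : ι → ℝ)
    (w : ι → Fin n → ℝ) (u : Fin n → ℝ) :
    dotProd (∑ b ∈ s, c b • w b) u = ∑ b ∈ s, c b * dotProd (w b) u := by
  simp [dotProd, Finset.sum_apply, Finset.sum_mul, Finset.mul_sum]
  rw [Finset.sum_comm]
  exact Finset.sum_congr rfl fun i _ => Finset.sum_congr rfl fun j _ => by ring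

lemma dot_sum_smul_right {n : ℕ} {ι : Type*} (s : Finset ι) (c : ι → ℝ)
    (w : ι → Fin n → ℝ) (u : Fin n → ℝ) :
    dotProd u (∑ b ∈ s, c b • w b) = ∑ b ∈ s, c b * dotProd u (w b) := by
  rw [dot_comm, dot_sum_smul_left]
  exact Finset.sum_congr rfl fun i _ => by rw [dot_comm]

lemma dot_self_eq_zero {n : ℕ} {u : Fin n → ℝ} (h : dotProd u u = 0) : u = 0 := by
  have := (Finset.sum_eq_zero_iff_of_nonneg (fun i _ => mul_self_nonneg (u i))).1 h
  funext i
  exact mul_self_eq_zero.1 (this i (Finset.mem_univ i))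

lemma dot_add_right {n : ℕ} (u v w : Fin n → ℝ) :
    dotProd u (v + w) = dotProd u v + dotProd u w := by
  simp [dotProd, mul_add, Finset.sum_add_distrib]

lemma dot_smul_right {n : ℕ} (c : ℝ) (u v : Fin n → ℝ) :
    dotProd u (c • v) = c * dotProd u v := by
  simp [dotProd, Finset.mul_sum]; exact Finset.sum_congr rfl fun i _ => by ring

lemma fderiv_dot {d n : ℕ} {f g : (Fin d → ℝ) → (Fin n → ℝ)} {x : Fin d → ℝ}
    (hf : DifferentiableAt ℝ f x) (hg : DifferentiableAt ℝ g x) (v : Fin d → ℝ) :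
    fderiv ℝ (fun y => dotProd (f y) (g y)) x v =
      dotProd (fderiv ℝ f x v) (g x) + dotProd (f x) (fderiv ℝ g x v) := by
  have hf' := hf.hasFDerivAt
  have hg' := hg.hasFDerivAt
  have H : HasFDerivAt (fun y => dotProd (f y) (g y))
      (∑ i : Fin n, (f x i • ((ContinuousLinearMap.proj i).comp (fderiv ℝ g x))
        + g x i • ((ContinuousLinearMap.proj i).comp (fderiv ℝ f x)))) x := by
    have key : ∀ i : Fin n, HasFDerivAt (fun y => f y i * g y i)
        (f x i • ((ContinuousLinearMap.proj i).comp (fderiv ℝ g x))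
          + g x i • ((ContinuousLinearMap.proj i).comp (fderiv ℝ f x))) x := by
      intro i
      have h1 : HasFDerivAt (fun y => f y i)
          ((ContinuousLinearMap.proj i).comp (fderiv ℝ f x)) x :=
        (ContinuousLinearMap.proj (R := ℝ) (φ := fun _ : Fin n => ℝ) i).hasFDerivAt.comp x hf'
      have h2 : HasFDerivAt (fun y => g y i)
          ((ContinuousLinearMap.proj i).comp (fderiv ℝ g x)) x :=
        (ContinuousLinearMap.proj (R := ℝ) (φ := fun _ : Fin n => ℝ) i).hasFDerivAt.comp x hg'
      exact h1.mul h2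
    exact HasFDerivAt.fun_sum (fun i _ => key i)
  rw [show (fun y => dotProd (f y) (g y)) = fun y => ∑ i, f y i * g y i from rfl] at *
  rw [H.fderiv]
  simp only [ContinuousLinearMap.sum_apply, ContinuousLinearMap.add_apply,
    ContinuousLinearMap.smul_apply, ContinuousLinearMap.coe_comp', Function.comp_apply,
    ContinuousLinearMap.proj_apply, smul_eq_mul, dotProd]
  rw [Finset.sum_add_distrib, add_comm]
  congr 1 <;> exact Finset.sum_congr rfl fun i _ => by ring

lemma smooth_pd1 {d : ℕ} {G : (Fin d → ℝ) → (Fin (d + 2) → ℝ)}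
    (hG : ContDiff ℝ (⊤ : ℕ∞) G) (α : Fin d) : ContDiff ℝ (⊤ : ℕ∞) (fun y => pderiv₁ G α y) := by
  simp only [pderiv₁]
  exact (hG.fderiv_right (by simp)).clm_apply contDiff_const

lemma pderiv₂_symm {d : ℕ} {G : (Fin d → ℝ) → (Fin (d + 2) → ℝ)}
    (hG : ContDiff ℝ (⊤ : ℕ∞) G) (α β : Fin d) (x : Fin d → ℝ) :
    pderiv₂ G α β x = pderiv₂ G β α x := by
  have hder : ∀ y, HasFDerivAt G (fderiv ℝ G y) y := fun y =>
    (hG.differentiable (by simp) y).hasFDerivAt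
  have hsm : ContDiff ℝ (⊤ : ℕ∞) (fderiv ℝ G) := hG.fderiv_right (by simp)
  have hx : HasFDerivAt (fderiv ℝ G) (fderiv ℝ (fderiv ℝ G) x) x :=
    (hsm.differentiable (by simp) x).hasFDerivAt
  have hsymm := second_derivative_symmetric hder hx (Pi.single β 1) (Pi.single α 1)
  have key : ∀ v w : Fin d → ℝ,
      fderiv ℝ (fun y => fderiv ℝ G y v) x w = fderiv ℝ (fderiv ℝ G) x w v := by
    intro v w
    have H : HasFDerivAt (fun y => fderiv ℝ G y v)
        ((ContinuousLinearMap.apply ℝ (Fin (d+2) → ℝ) v).comp (fderiv ℝ (fderiv ℝ G) x)) x :=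
      (ContinuousLinearMap.apply ℝ (Fin (d+2) → ℝ) v).hasFDerivAt.comp x hx
    rw [H.fderiv]; rfl
  simp only [pderiv₂, pderiv₁]
  rw [key, key]
  exact hsymm.symm

lemma gram_isUnit {d m : ℕ} {Fd : Fin d → Fin m → ℝ} (hli : LinearIndependent ℝ Fd) :
    IsUnit (Matrix.of fun a b => dotProd (Fd a) (Fd b)).det := by
  set g : Matrix (Fin d) (Fin d) ℝ := Matrix.of fun a b => dotProd (Fd a) (Fd b) with hg
  rw [isUnit_iff_ne_zero]
  intro hdet
  obtain ⟨v, hv0, hv⟩ := Matrix.exists_mulVec_eq_zero_iff.2 hdet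
  have hw : (∑ b, v b • Fd b) = 0 := by
    apply dot_self_eq_zero
    rw [dot_sum_smul_left]
    have hb : ∀ b, dotProd (Fd b) (∑ a, v a • Fd a) = g.mulVec v b := by
      intro b
      rw [dot_sum_smul_right]
      simp only [Matrix.mulVec, dotProduct, hg, Matrix.of_apply]
      exact Finset.sum_congr rfl fun j _ => mul_comm _ _
    rw [Finset.sum_congr rfl fun b _ => by rw [hb b], hv]
    simp
  have := Fintype.linearIndependent_iff.1 hli v hw
  exact hv0 (funext this)

lemma dot_add_left {n : ℕ} (u v w : Fin n → ℝ) :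
    dotProd (u + v) w = dotProd u w + dotProd v w := by
  rw [dot_comm, dot_add_right, dot_comm w u, dot_comm w v]
lemma dot_smul_left {n : ℕ} (c : ℝ) (u v : Fin n → ℝ) :
    dotProd (c • u) v = c * dotProd u v := by
  rw [dot_comm, dot_smul_right, dot_comm v u]
lemma dot_zero_left {n : ℕ} (v : Fin n → ℝ) : dotProd 0 v = 0 := by simp [dotProd]

lemma expansion {d : ℕ} {Fd : Fin d → Fin (d + 2) → ℝ} {n1 n2 : Fin (d + 2) → ℝ}
    (hli : LinearIndependent ℝ Fd)
    (hn1 : dotProd n1 n1 = 1) (hn2 : dotProd n2 n2 = 1) (h12 : dotProd n1 n2 = 0)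
    (ho1 : ∀ a, dotProd (Fd a) n1 = 0) (ho2 : ∀ a, dotProd (Fd a) n2 = 0)
    (v : Fin (d + 2) → ℝ) :
    v = ∑ a, (∑ b, (Matrix.of fun a b => dotProd (Fd a) (Fd b))⁻¹ a b
          * dotProd (Fd b) v) • Fd a
        + dotProd n1 v • n1 + dotProd n2 v • n2 := by
  set g : Matrix (Fin d) (Fin d) ℝ := Matrix.of fun a b => dotProd (Fd a) (Fd b) with hg
  have hdet : IsUnit g.det := gram_isUnit hli
  set e : Fin d ⊕ Fin 2 → (Fin (d + 2) → ℝ) := Sum.elim Fd ![n1, n2] with he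
  have lie : LinearIndependent ℝ e := by
    rw [Fintype.linearIndependent_iff]
    intro c hc
    rw [Fintype.sum_sum_type] at hc
    simp only [he, Sum.elim_inl, Sum.elim_inr, Fin.sum_univ_two, Matrix.cons_val_zero,
      Matrix.cons_val_one, Matrix.head_cons] at hc
    have dotc : ∀ u : Fin (d+2) → ℝ,
        (∑ a, c (Sum.inl a) * dotProd (Fd a) u)
          + (c (Sum.inr 0) * dotProd n1 u + c (Sum.inr 1) * dotProd n2 u) = 0 := by
      intro u
      rw [← dot_sum_smul_left Finset.univ (fun a => c (Sum.inl a)) Fd u,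
        ← dot_smul_left, ← dot_smul_left, ← dot_add_left, ← dot_add_left, hc, dot_zero_left]
    have hc0 : c (Sum.inr 0) = 0 := by
      have h := dotc n1
      simpa [hn1, ho1, dot_comm n2 n1, h12] using h
    have hc1 : c (Sum.inr 1) = 0 := by
      have h := dotc n2
      simpa [hn2, ho2, h12] using h
    have hrest : ∑ a, c (Sum.inl a) • Fd a = 0 := by
      rw [hc0, hc1] at hc
      simpa using hc
    have hFd := Fintype.linearIndependent_iff.1 hli (fun a => c (Sum.inl a)) hrest
    intro i
    rcases i with a | j
    · exact hFd a
    · fin_cases j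
      · exact hc0
      · exact hc1
  have hcard : Fintype.card (Fin d ⊕ Fin 2) = Module.finrank ℝ (Fin (d + 2) → ℝ) := by
    simp [Module.finrank_fin_fun]
  let B : Module.Basis (Fin d ⊕ Fin 2) ℝ (Fin (d + 2) → ℝ) :=
    basisOfLinearIndependentOfCardEqFinrank lie hcard
  have hB : ⇑B = e := coe_basisOfLinearIndependentOfCardEqFinrank lie hcard
  set V : Fin (d + 2) → ℝ :=
    ∑ a, (∑ b, g⁻¹ a b * dotProd (Fd b) v) • Fd a
      + dotProd n1 v • n1 + dotProd n2 v • n2 with hV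
  have hdotV : ∀ u, dotProd u V =
      ∑ a, (∑ b, g⁻¹ a b * dotProd (Fd b) v) * dotProd u (Fd a)
        + dotProd n1 v * dotProd u n1 + dotProd n2 v * dotProd u n2 := by
    intro u
    rw [hV, dot_add_right, dot_add_right, dot_smul_right, dot_smul_right,
      dot_sum_smul_right]
  have hkey : ∀ i, dotProd (e i) (v - V) = 0 := by
    intro i
    rw [dot_sub_right]
    rcases i with csub | j
    · show dotProd (Fd csub) v - dotProd (Fd csub) V = 0
      rw [hdotV, ho1, ho2]
      have hmul : ∀ b, ∑ a, g csub a * g⁻¹ a b = (1 : Matrix (Fin d) (Fin d) ℝ) csub b := by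
        intro b
        rw [← Matrix.mul_apply, Matrix.mul_nonsing_inv g hdet]
      have swap : (∑ a, (∑ b, g⁻¹ a b * dotProd (Fd b) v) * dotProd (Fd csub) (Fd a))
          = ∑ b, (∑ a, g csub a * g⁻¹ a b) * dotProd (Fd b) v := by
        simp only [Finset.sum_mul]
        rw [Finset.sum_comm]
        exact Finset.sum_congr rfl fun b _ => Finset.sum_congr rfl fun a _ => by
          rw [show dotProd (Fd csub) (Fd a) = g csub a from rfl]; ring
      rw [swap, Finset.sum_congr rfl fun b _ => by rw [hmul b]]
      simp [Matrix.one_apply]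
    · fin_cases j
      · show dotProd n1 v - dotProd n1 V = 0
        rw [hdotV]
        rw [Finset.sum_congr rfl fun a _ => by
          rw [dot_comm n1 (Fd a), ho1, mul_zero]]
        rw [hn1, h12]
        simp
      · show dotProd n2 v - dotProd n2 V = 0
        rw [hdotV]
        rw [Finset.sum_congr rfl fun a _ => by
          rw [dot_comm n2 (Fd a), ho2, mul_zero]]
        rw [dot_comm n2 n1, h12, hn2]
        simp
  have hW : v - V = 0 := by
    apply dot_self_eq_zero
    have hrepr := B.sum_repr (v - V)
    rw [hB] at hrepr
    calc dotProd (v - V) (v - V)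
        = dotProd (∑ i, B.repr (v - V) i • e i) (v - V) := by rw [hrepr]
      _ = ∑ i, B.repr (v - V) i * dotProd (e i) (v - V) := dot_sum_smul_left _ _ _ _
      _ = 0 := by simp [hkey]
  exact sub_eq_zero.1 hW

lemma deriv_dot_const {d n : ℕ} {f g : (Fin d → ℝ) → (Fin n → ℝ)} {x : Fin d → ℝ}
    (hf : DifferentiableAt ℝ f x) (hg : DifferentiableAt ℝ g x) {c : ℝ}
    (hc : ∀ y, dotProd (f y) (g y) = c) (v : Fin d → ℝ) :
    dotProd (fderiv ℝ f x v) (g x) + dotProd (f x) (fderiv ℝ g x v) = 0 := by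
  have h := fderiv_dot hf hg v
  have hcf : (fun y => dotProd (f y) (g y)) = fun _ => c := funext hc
  rw [hcf, fderiv_fun_const] at h
  simpa using h.symm


/-- the complex Ricci equation for the curvature of the normal
connection: `∂_α A_β − ∂_β A_α = Im(λ_α^γ conj(λ_{βγ}))`, where
`A_α = ∂_α ν₁ · ν₂` and indices are raised with the induced metric. -/
theorem complex_ricci_equation (d : ℕ) (hd : 1 ≤ d)
    (F ν₁ ν₂ : (Fin d → ℝ) → (Fin (d + 2) → ℝ))
    (hF : ContDiff ℝ (⊤ : ℕ∞) F) (hν₁s : ContDiff ℝ (⊤ : ℕ∞) ν₁) (hν₂s : ContDiff ℝ (⊤ : ℕ∞) ν₂)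
    (himm : ∀ x, LinearIndependent ℝ (fun α => pderiv₁ F α x))
    (hν₁ : ∀ x, dotProd (ν₁ x) (ν₁ x) = 1)
    (hν₂ : ∀ x, dotProd (ν₂ x) (ν₂ x) = 1)
    (hν₁₂ : ∀ x, dotProd (ν₁ x) (ν₂ x) = 0)
    (hnormal₁ : ∀ x α, dotProd (pderiv₁ F α x) (ν₁ x) = 0)
    (hnormal₂ : ∀ x α, dotProd (pderiv₁ F α x) (ν₂ x) = 0) :
    ∀ x α β,
      fderiv ℝ (fun y => connA ν₁ ν₂ β y) x (Pi.single α 1)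
          - fderiv ℝ (fun y => connA ν₁ ν₂ α y) x (Pi.single β 1) =
        (∑ γ, lamUp F ν₁ ν₂ α γ x * (starRingEnd ℂ) (lamC F ν₁ ν₂ β γ x)).im := by
  intro x α β
  have dν1 : DifferentiableAt ℝ ν₁ x := (hν₁s.differentiable (by simp)).differentiableAt
  have dν2 : DifferentiableAt ℝ ν₂ x := (hν₂s.differentiable (by simp)).differentiableAt
  have dpν1 : ∀ b, DifferentiableAt ℝ (fun y => pderiv₁ ν₁ b y) x := fun b =>
    ((smooth_pd1 hν₁s b).differentiable (by simp)).differentiableAt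
  have dpF : ∀ b, DifferentiableAt ℝ (fun y => pderiv₁ F b y) x := fun b =>
    ((smooth_pd1 hF b).differentiable (by simp)).differentiableAt
  -- first-order orthogonality facts
  have f1 : ∀ a, dotProd (pderiv₁ ν₁ a x) (ν₁ x) = 0 := by
    intro a
    have h : dotProd (pderiv₁ ν₁ a x) (ν₁ x) + dotProd (ν₁ x) (pderiv₁ ν₁ a x) = 0 :=
      deriv_dot_const dν1 dν1 hν₁ (Pi.single a 1)
    rw [dot_comm (ν₁ x)] at h
    linarith
  have f2 : ∀ a, dotProd (pderiv₁ ν₂ a x) (ν₂ x) = 0 := by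
    intro a
    have h : dotProd (pderiv₁ ν₂ a x) (ν₂ x) + dotProd (ν₂ x) (pderiv₁ ν₂ a x) = 0 :=
      deriv_dot_const dν2 dν2 hν₂ (Pi.single a 1)
    rw [dot_comm (ν₂ x)] at h
    linarith
  have f4 : ∀ a c, dotProd (pderiv₁ F c x) (pderiv₁ ν₁ a x)
      = - dotProd (pderiv₂ F a c x) (ν₁ x) := by
    intro a c
    have h : dotProd (pderiv₂ F a c x) (ν₁ x) + dotProd (pderiv₁ F c x) (pderiv₁ ν₁ a x) = 0 :=
      deriv_dot_const (dpF c) dν1 (fun y => hnormal₁ y c) (Pi.single a 1)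
    linarith
  have f5 : ∀ a c, dotProd (pderiv₁ F c x) (pderiv₁ ν₂ a x)
      = - dotProd (pderiv₂ F a c x) (ν₂ x) := by
    intro a c
    have h : dotProd (pderiv₂ F a c x) (ν₂ x) + dotProd (pderiv₁ F c x) (pderiv₁ ν₂ a x) = 0 :=
      deriv_dot_const (dpF c) dν2 (fun y => hnormal₂ y c) (Pi.single a 1)
    linarith
  -- the key pairing computation
  have key : ∀ γ δ : Fin d, dotProd (pderiv₁ ν₁ γ x) (pderiv₁ ν₂ δ x)
      = ∑ a, ∑ b, (inducedMetric F x)⁻¹ a b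
          * (dotProd (pderiv₂ F γ a x) (ν₁ x) * dotProd (pderiv₂ F δ b x) (ν₂ x)) := by
    intro γ δ
    have E := expansion (himm x) (hν₁ x) (hν₂ x) (hν₁₂ x)
      (fun a => hnormal₁ x a) (fun a => hnormal₂ x a) (pderiv₁ ν₂ δ x)
    have hgm : (Matrix.of fun a b =>
        dotProd (pderiv₁ F a x) (pderiv₁ F b x)) = inducedMetric F x := rfl
    rw [hgm] at E
    calc dotProd (pderiv₁ ν₁ γ x) (pderiv₁ ν₂ δ x)
        = ∑ a, (∑ b, (inducedMetric F x)⁻¹ a b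
              * dotProd (pderiv₁ F b x) (pderiv₁ ν₂ δ x)) * dotProd (pderiv₁ ν₁ γ x) (pderiv₁ F a x)
          + dotProd (ν₁ x) (pderiv₁ ν₂ δ x) * dotProd (pderiv₁ ν₁ γ x) (ν₁ x)
          + dotProd (ν₂ x) (pderiv₁ ν₂ δ x) * dotProd (pderiv₁ ν₁ γ x) (ν₂ x) := by
            conv_lhs => rw [E]
            rw [dot_add_right, dot_add_right, dot_smul_right, dot_smul_right,
              dot_sum_smul_right]
      _ = ∑ a, (∑ b, (inducedMetric F x)⁻¹ a b
              * dotProd (pderiv₁ F b x) (pderiv₁ ν₂ δ x)) * dotProd (pderiv₁ ν₁ γ x) (pderiv₁ F a x) := by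
            rw [f1 γ, dot_comm (ν₂ x) (pderiv₁ ν₂ δ x), f2 δ]
            ring
      _ = ∑ a, ∑ b, (inducedMetric F x)⁻¹ a b
            * (dotProd (pderiv₂ F γ a x) (ν₁ x) * dotProd (pderiv₂ F δ b x) (ν₂ x)) := by
            refine Finset.sum_congr rfl fun a _ => ?_
            rw [dot_comm (pderiv₁ ν₁ γ x) (pderiv₁ F a x), f4 γ a, Finset.sum_mul]
            refine Finset.sum_congr rfl fun b _ => ?_
            rw [f5 δ b]
            ring
  -- compute the two fderiv's of connA
  have Lβ : fderiv ℝ (fun y => connA ν₁ ν₂ β y) x (Pi.single α 1)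
      = dotProd (pderiv₂ ν₁ α β x) (ν₂ x)
        + dotProd (pderiv₁ ν₁ β x) (pderiv₁ ν₂ α x) :=
    fderiv_dot (dpν1 β) dν2 (Pi.single α 1)
  have Lα : fderiv ℝ (fun y => connA ν₁ ν₂ α y) x (Pi.single β 1)
      = dotProd (pderiv₂ ν₁ β α x) (ν₂ x)
        + dotProd (pderiv₁ ν₁ α x) (pderiv₁ ν₂ β x) :=
    fderiv_dot (dpν1 α) dν2 (Pi.single β 1)
  -- compute the right-hand side
  have hRHS : (∑ γ, lamUp F ν₁ ν₂ α γ x * (starRingEnd ℂ) (lamC F ν₁ ν₂ β γ x)).im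
      = ∑ γ, ∑ σ, (inducedMetric F x)⁻¹ γ σ
          * (dotProd (pderiv₂ F α σ x) (ν₂ x) * dotProd (pderiv₂ F β γ x) (ν₁ x)
            - dotProd (pderiv₂ F α σ x) (ν₁ x) * dotProd (pderiv₂ F β γ x) (ν₂ x)) := by
    rw [Complex.im_sum]
    refine Finset.sum_congr rfl fun γ _ => ?_
    rw [lamUp, Finset.sum_mul, Complex.im_sum]
    refine Finset.sum_congr rfl fun σ _ => ?_
    simp only [lamC, map_add, map_mul, Complex.conj_ofReal, Complex.conj_I,
      Complex.add_im, Complex.add_re, Complex.mul_im, Complex.mul_re,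
      Complex.ofReal_re, Complex.ofReal_im, Complex.I_re, Complex.I_im, Complex.neg_re, Complex.neg_im]
    ring
  -- symmetry of the inverse metric
  have gsym : ∀ a b, (inducedMetric F x)⁻¹ a b = (inducedMetric F x)⁻¹ b a := by
    have hsym : (inducedMetric F x).transpose = inducedMetric F x := by
      ext a b
      simp only [Matrix.transpose_apply, inducedMetric, Matrix.of_apply]
      exact dot_comm _ _
    have h2 : ((inducedMetric F x)⁻¹).transpose = (inducedMetric F x)⁻¹ := by
      rw [Matrix.transpose_nonsing_inv, hsym]
    intro a b
    conv_lhs => rw [← h2]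
    exact Matrix.transpose_apply _ a b
  rw [Lβ, Lα, pderiv₂_symm hν₁s α β x, key β α, key α β, hRHS]
  have hswap : (∑ a, ∑ b, (inducedMetric F x)⁻¹ a b
        * (dotProd (pderiv₂ F α a x) (ν₁ x) * dotProd (pderiv₂ F β b x) (ν₂ x)))
      = ∑ γ, ∑ σ, (inducedMetric F x)⁻¹ γ σ
        * (dotProd (pderiv₂ F α σ x) (ν₁ x) * dotProd (pderiv₂ F β γ x) (ν₂ x)) := by
    rw [Finset.sum_comm]
    exact Finset.sum_congr rfl fun b _ => Finset.sum_congr rfl fun a _ => by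
      rw [gsym a b]
  have hs1 : (∑ γ, ∑ σ, (inducedMetric F x)⁻¹ γ σ
        * (dotProd (pderiv₂ F α σ x) (ν₂ x) * dotProd (pderiv₂ F β γ x) (ν₁ x)
          - dotProd (pderiv₂ F α σ x) (ν₁ x) * dotProd (pderiv₂ F β γ x) (ν₂ x)))
      = (∑ a, ∑ b, (inducedMetric F x)⁻¹ a b
          * (dotProd (pderiv₂ F β a x) (ν₁ x) * dotProd (pderiv₂ F α b x) (ν₂ x)))
        - ∑ a, ∑ b, (inducedMetric F x)⁻¹ a b
          * (dotProd (pderiv₂ F α a x) (ν₁ x) * dotProd (pderiv₂ F β b x) (ν₂ x)) := by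
    simp only [mul_sub, Finset.sum_sub_distrib]
    rw [hswap]
    congr 1
    exact Finset.sum_congr rfl fun γ _ => Finset.sum_congr rfl fun σ _ => by ring
  rw [hs1]
  ring


end
end

section
/- Suppose the coordinates on the time-dependent manifold (Σ_t, g) satisfy the heat-coordinate condition g^{αβ} Γ^γ_{αβ} = V^γ, and the skew mean curvature flow evolution gives ∂_t g_{αβ} = 2 Im(ψ conj(λ_{αβ})) + ∇_α V_β + ∇_β V_α. Then the metric solves the parabolic equation ∂_t g_{μν} − g^{αβ} ∂²_{αβ} g_{μν} = 2 Ric_{μν} + 2 Im(ψ conj(λ_{μν})) − 2 g^{αβ} Γ_{μβ,σ} Γ^σ_{αν} + ∂_μ g^{αβ} Γ_{αβ,ν} + ∂_ν g^{αβ} Γ_{αβ,μ}. -/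
noncomputable section

open Complex

variable {d : ℕ}

/-- Entry of a time-dependent metric. -/
def tgEntry (g : ℝ → (Fin d → ℝ) → Matrix (Fin d) (Fin d) ℝ) (t : ℝ) (α β : Fin d)
    (x : Fin d → ℝ) : ℝ := g t x α β

/-- Entry of the inverse metric. -/
def tgInvEntry (g : ℝ → (Fin d → ℝ) → Matrix (Fin d) (Fin d) ℝ) (t : ℝ) (α β : Fin d)
    (x : Fin d → ℝ) : ℝ := (g t x)⁻¹ α β

/-- First spatial partial derivative. -/
def spd (u : (Fin d → ℝ) → ℝ) (i : Fin d) (x : Fin d → ℝ) : ℝ :=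
  fderiv ℝ u x (Pi.single i 1)

/-- Lowered Christoffel symbols `Γ_{αβ,σ}` of `g(t)`. -/
def tChrLow (g : ℝ → (Fin d → ℝ) → Matrix (Fin d) (Fin d) ℝ) (t : ℝ) (α β σ : Fin d)
    (x : Fin d → ℝ) : ℝ :=
  (spd (tgEntry g t β σ) α x + spd (tgEntry g t α σ) β x - spd (tgEntry g t α β) σ x) / 2

/-- Christoffel symbols `Γ^γ_{αβ}` of `g(t)`. -/
def tChrUp (g : ℝ → (Fin d → ℝ) → Matrix (Fin d) (Fin d) ℝ) (t : ℝ) (γ α β : Fin d)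
    (x : Fin d → ℝ) : ℝ :=
  ∑ σ, tgInvEntry g t γ σ x * tChrLow g t α β σ x

/-- Riemann curvature
`R_{σγαβ} = ∂_α Γ_{βγ,σ} − ∂_β Γ_{αγ,σ} + Γ^m_{βσ} Γ_{αγ,m} − Γ^m_{ασ} Γ_{βγ,m}`. -/
def tRiemann (g : ℝ → (Fin d → ℝ) → Matrix (Fin d) (Fin d) ℝ) (t : ℝ) (σ γ α β : Fin d)
    (x : Fin d → ℝ) : ℝ :=
  spd (tChrLow g t β γ σ) α x - spd (tChrLow g t α γ σ) β x
    + ∑ m, tChrUp g t m β σ x * tChrLow g t α γ m x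
    - ∑ m, tChrUp g t m α σ x * tChrLow g t β γ m x

/-- Ricci curvature `Ric_{αβ} = g^{σγ} R_{γασβ}`. -/
def tRicci (g : ℝ → (Fin d → ℝ) → Matrix (Fin d) (Fin d) ℝ) (t : ℝ) (α β : Fin d)
    (x : Fin d → ℝ) : ℝ :=
  ∑ σ, ∑ γ, tgInvEntry g t σ γ x * tRiemann g t γ α σ β x

/-- The advection field `V^γ = g^{αβ} Γ^γ_{αβ}` of the heat coordinate gauge. -/
def tVup (g : ℝ → (Fin d → ℝ) → Matrix (Fin d) (Fin d) ℝ) (t : ℝ) (γ : Fin d)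
    (x : Fin d → ℝ) : ℝ :=
  ∑ α, ∑ β, tgInvEntry g t α β x * tChrUp g t γ α β x

/-- `V_β = g_{βγ} V^γ`. -/
def tVlow (g : ℝ → (Fin d → ℝ) → Matrix (Fin d) (Fin d) ℝ) (t : ℝ) (β : Fin d)
    (x : Fin d → ℝ) : ℝ :=
  ∑ γ, g t x β γ * tVup g t γ x

/-- Covariant derivative `∇_α V_β = ∂_α V_β − Γ^σ_{αβ} V_σ`. -/
def tCovV (g : ℝ → (Fin d → ℝ) → Matrix (Fin d) (Fin d) ℝ) (t : ℝ) (α β : Fin d)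
    (x : Fin d → ℝ) : ℝ :=
  spd (tVlow g t β) α x - ∑ σ, tChrUp g t σ α β x * tVlow g t σ x

/-- Complex mean curvature `ψ = g^{αβ} λ_{αβ}`. -/
def tPsi (g : ℝ → (Fin d → ℝ) → Matrix (Fin d) (Fin d) ℝ)
    (lam : Fin d → Fin d → ℝ → (Fin d → ℝ) → ℂ) (t : ℝ) (x : Fin d → ℝ) : ℂ :=
  ∑ α, ∑ β, (tgInvEntry g t α β x : ℝ) * lam α β t x


lemma sum4_perm {M : Type*} [AddCommMonoid M] {n : ℕ} (F : Fin n → Fin n → Fin n → Fin n → M) :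
    ∑ a, ∑ b, ∑ c, ∑ e, F a b c e = ∑ e, ∑ c, ∑ a, ∑ b, F a b c e := by
  have h1 : (∑ p : Fin n × Fin n × Fin n × Fin n, F p.1 p.2.1 p.2.2.1 p.2.2.2)
      = ∑ a, ∑ b, ∑ c, ∑ e, F a b c e := by simp [Fintype.sum_prod_type]
  have h2 : (∑ p : Fin n × Fin n × Fin n × Fin n, F p.2.2.1 p.2.2.2 p.2.1 p.1)
      = ∑ e, ∑ c, ∑ a, ∑ b, F a b c e := by simp [Fintype.sum_prod_type]
  rw [← h1, ← h2]
  exact Fintype.sum_equiv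
    ⟨fun p => (p.2.2.2, p.2.2.1, p.1, p.2.1), fun p => (p.2.2.1, p.2.2.2, p.2.1, p.1),
      fun p => rfl, fun p => rfl⟩ _ _ (fun p => rfl)

lemma key_algebra {d : ℕ} (b : Fin d → Fin d → ℝ)
    (db : Fin d → Fin d → Fin d → ℝ)
    (dda : Fin d → Fin d → Fin d → Fin d → ℝ)
    (Gl : Fin d → Fin d → Fin d → ℝ)
    (dGl : Fin d → Fin d → Fin d → Fin d → ℝ)
    (Gu : Fin d → Fin d → Fin d → ℝ)
    (Vl : Fin d → ℝ)
    (hb : ∀ α β, b α β = b β α)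
    (hGls : ∀ α β σ, Gl α β σ = Gl β α σ)
    (hdda_s : ∀ i j α β, dda i j α β = dda i j β α)
    (hdda_c : ∀ i j α β, dda i j α β = dda j i α β)
    (hdGl : ∀ i α β σ, dGl i α β σ = (dda i α β σ + dda i β α σ - dda i σ α β)/2)
    (hGu : ∀ γ α β, Gu γ α β = ∑ σ, b γ σ * Gl α β σ)
    (hVl : ∀ σ, Vl σ = ∑ α, ∑ β, b α β * Gl α β σ)
    (μ ν : Fin d) :
    ((∑ α, ∑ β, (db μ α β * Gl α β ν + b α β * dGl μ α β ν)) - ∑ σ, Gu σ μ ν * Vl σ)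
      + ((∑ α, ∑ β, (db ν α β * Gl α β μ + b α β * dGl ν α β μ)) - ∑ σ, Gu σ ν μ * Vl σ)
      - ∑ α, ∑ β, b α β * dda α β μ ν
    = 2 * (∑ σ, ∑ γ, b σ γ *
          (dGl σ ν μ γ - dGl ν σ μ γ + ∑ m, Gu m ν γ * Gl σ μ m - ∑ m, Gu m σ γ * Gl ν μ m))
      - 2 * (∑ α, ∑ β, ∑ σ, b α β * Gl μ β σ * Gu σ α ν)
      + (∑ α, ∑ β, db μ α β * Gl α β ν) + (∑ α, ∑ β, db ν α β * Gl α β μ) := by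
  classical
  have sum2_add : ∀ f g : Fin d → Fin d → ℝ,
      (∑ α, ∑ β, (f α β + g α β)) = (∑ α, ∑ β, f α β) + ∑ α, ∑ β, g α β := by
    intro f g; simp [Finset.sum_add_distrib]
  have swap12 : ∀ F : Fin d → Fin d → ℝ,
      (∑ α, ∑ β, b α β * F α β) = ∑ α, ∑ β, b α β * F β α := by
    intro F
    rw [Finset.sum_comm]
    exact Finset.sum_congr rfl fun α _ => Finset.sum_congr rfl fun β _ => by rw [hb]
  have split3 : ∀ p q r : Fin d → Fin d → ℝ,
      (∑ α, ∑ β, b α β * ((p α β + q α β - r α β)/2)) =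
        ((∑ α, ∑ β, b α β * p α β) + (∑ α, ∑ β, b α β * q α β)
          - (∑ α, ∑ β, b α β * r α β))/2 := by
    intro p q r
    have h : ∀ α β : Fin d, b α β * ((p α β + q α β - r α β)/2)
        = (b α β * p α β + b α β * q α β - b α β * r α β)/2 := by intro α β; ring
    simp only [h, Finset.sum_sub_distrib, Finset.sum_add_distrib, ← Finset.sum_div]
  -- LHS splits
  have hLμ : (∑ α, ∑ β, (db μ α β * Gl α β ν + b α β * dGl μ α β ν))
      = (∑ α, ∑ β, db μ α β * Gl α β ν) + ∑ α, ∑ β, b α β * dGl μ α β ν := sum2_add _ _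
  have hLν : (∑ α, ∑ β, (db ν α β * Gl α β μ + b α β * dGl ν α β μ))
      = (∑ α, ∑ β, db ν α β * Gl α β μ) + ∑ α, ∑ β, b α β * dGl ν α β μ := sum2_add _ _
  -- second-order expansions
  have hSμ : (∑ α, ∑ β, b α β * dGl μ α β ν)
      = ((∑ α, ∑ β, b α β * dda μ α β ν) + (∑ α, ∑ β, b α β * dda μ β α ν)
          - (∑ α, ∑ β, b α β * dda μ ν α β))/2 := by
    rw [← split3]
    exact Finset.sum_congr rfl fun α _ => Finset.sum_congr rfl fun β _ => by rw [hdGl]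
  have hSν : (∑ α, ∑ β, b α β * dGl ν α β μ)
      = ((∑ α, ∑ β, b α β * dda ν α β μ) + (∑ α, ∑ β, b α β * dda ν β α μ)
          - (∑ α, ∑ β, b α β * dda ν μ α β))/2 := by
    rw [← split3]
    exact Finset.sum_congr rfl fun α _ => Finset.sum_congr rfl fun β _ => by rw [hdGl]
  have hT1b : (∑ α, ∑ β, b α β * dda μ β α ν) = ∑ α, ∑ β, b α β * dda μ α β ν :=
    (swap12 fun α β => dda μ α β ν).symm
  have hT3b : (∑ α, ∑ β, b α β * dda ν β α μ) = ∑ α, ∑ β, b α β * dda ν α β μ :=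
    (swap12 fun α β => dda ν α β μ).symm
  have hT2b : (∑ α, ∑ β, b α β * dda ν μ α β) = ∑ α, ∑ β, b α β * dda μ ν α β :=
    Finset.sum_congr rfl fun α _ => Finset.sum_congr rfl fun β _ => by rw [hdda_c ν μ]
  -- Ricci decomposition
  have hRic : (∑ σ, ∑ γ, b σ γ *
        (dGl σ ν μ γ - dGl ν σ μ γ + ∑ m, Gu m ν γ * Gl σ μ m - ∑ m, Gu m σ γ * Gl ν μ m))
      = (∑ σ, ∑ γ, b σ γ * dGl σ ν μ γ) - (∑ σ, ∑ γ, b σ γ * dGl ν σ μ γ)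
        + (∑ σ, ∑ γ, b σ γ * (∑ m, Gu m ν γ * Gl σ μ m))
        - (∑ σ, ∑ γ, b σ γ * (∑ m, Gu m σ γ * Gl ν μ m)) := by
    simp only [mul_add, mul_sub, Finset.sum_add_distrib, Finset.sum_sub_distrib]
  have hRa : (∑ σ, ∑ γ, b σ γ * dGl σ ν μ γ)
      = ((∑ α, ∑ β, b α β * dda α ν μ β) + (∑ α, ∑ β, b α β * dda α μ ν β)
          - (∑ α, ∑ β, b α β * dda α β ν μ))/2 := by
    rw [← split3]
    exact Finset.sum_congr rfl fun α _ => Finset.sum_congr rfl fun β _ => by rw [hdGl]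
  have hRb : (∑ σ, ∑ γ, b σ γ * dGl ν σ μ γ)
      = ((∑ α, ∑ β, b α β * dda ν α μ β) + (∑ α, ∑ β, b α β * dda ν μ α β)
          - (∑ α, ∑ β, b α β * dda ν β α μ))/2 := by
    rw [← split3]
    exact Finset.sum_congr rfl fun α _ => Finset.sum_congr rfl fun β _ => by rw [hdGl]
  have hU1 : (∑ α, ∑ β, b α β * dda α ν μ β) = ∑ α, ∑ β, b α β * dda ν α μ β :=
    Finset.sum_congr rfl fun α _ => Finset.sum_congr rfl fun β _ => by rw [hdda_c α ν]
  have hU2 : (∑ α, ∑ β, b α β * dda α μ ν β) = ∑ α, ∑ β, b α β * dda μ α β ν :=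
    Finset.sum_congr rfl fun α _ => Finset.sum_congr rfl fun β _ => by
      rw [hdda_c α μ, hdda_s μ α ν β]
  have hU3 : (∑ α, ∑ β, b α β * dda α β ν μ) = ∑ α, ∑ β, b α β * dda α β μ ν :=
    Finset.sum_congr rfl fun α _ => Finset.sum_congr rfl fun β _ => by rw [hdda_s α β ν μ]
  -- first-order terms
  have hGusym : ∀ σ i j, Gu σ i j = Gu σ j i := fun σ i j => by
    rw [hGu, hGu]
    exact Finset.sum_congr rfl fun ρ _ => by rw [hGls]
  have hCsym : (∑ σ, Gu σ ν μ * Vl σ) = ∑ σ, Gu σ μ ν * Vl σ :=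
    Finset.sum_congr rfl fun σ _ => by rw [hGusym σ ν μ]
  -- Z = C
  have hZ : (∑ σ, ∑ γ, b σ γ * (∑ m, Gu m σ γ * Gl ν μ m)) = ∑ σ, Gu σ μ ν * Vl σ := by
    have lhs_eq : (∑ σ, ∑ γ, b σ γ * (∑ m, Gu m σ γ * Gl ν μ m))
        = ∑ σ, ∑ γ, ∑ m, ∑ ρ, b σ γ * b m ρ * Gl σ γ ρ * Gl ν μ m := by
      refine Finset.sum_congr rfl fun σ _ => Finset.sum_congr rfl fun γ _ => ?_
      rw [Finset.mul_sum]
      refine Finset.sum_congr rfl fun m _ => ?_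
      rw [hGu, Finset.sum_mul, Finset.mul_sum]
      exact Finset.sum_congr rfl fun ρ _ => by ring
    have rhs_eq : (∑ σ, Gu σ μ ν * Vl σ)
        = ∑ s, ∑ r, ∑ a, ∑ c, b s r * Gl μ ν r * (b a c * Gl a c s) := by
      refine Finset.sum_congr rfl fun s _ => ?_
      rw [hGu, hVl, Finset.sum_mul]
      refine Finset.sum_congr rfl fun r _ => ?_
      rw [Finset.mul_sum]
      refine Finset.sum_congr rfl fun a _ => ?_
      rw [Finset.mul_sum]
    rw [lhs_eq, rhs_eq, sum4_perm]
    refine Finset.sum_congr rfl fun ρ _ => Finset.sum_congr rfl fun m _ =>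
      Finset.sum_congr rfl fun σ _ => Finset.sum_congr rfl fun γ _ => ?_
    rw [hb ρ m, hGls μ ν m]
    ring
  -- W = Q
  have hW : (∑ σ, ∑ γ, b σ γ * (∑ m, Gu m ν γ * Gl σ μ m))
      = ∑ α, ∑ β, ∑ σ, b α β * Gl μ β σ * Gu σ α ν := by
    have lhs_eq : (∑ σ, ∑ γ, b σ γ * (∑ m, Gu m ν γ * Gl σ μ m))
        = ∑ σ, ∑ γ, ∑ m, ∑ ρ, b σ γ * b m ρ * Gl ν γ ρ * Gl σ μ m := by
      refine Finset.sum_congr rfl fun σ _ => Finset.sum_congr rfl fun γ _ => ?_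
      rw [Finset.mul_sum]
      refine Finset.sum_congr rfl fun m _ => ?_
      rw [hGu, Finset.sum_mul, Finset.mul_sum]
      exact Finset.sum_congr rfl fun ρ _ => by ring
    have rhs_eq : (∑ α, ∑ β, ∑ σ, b α β * Gl μ β σ * Gu σ α ν)
        = ∑ a, ∑ c, ∑ s, ∑ r, b a c * Gl μ c s * (b s r * Gl a ν r) := by
      refine Finset.sum_congr rfl fun a _ => Finset.sum_congr rfl fun c _ =>
        Finset.sum_congr rfl fun s _ => ?_
      rw [hGu, Finset.mul_sum]
    rw [lhs_eq, rhs_eq, Finset.sum_comm]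
    refine Finset.sum_congr rfl fun γ _ => Finset.sum_congr rfl fun σ _ =>
      Finset.sum_congr rfl fun m _ => Finset.sum_congr rfl fun ρ _ => ?_
    rw [hb γ σ, hGls μ σ m, hGls γ ν ρ]
    ring
  linarith [hLμ, hLν, hSμ, hSν, hT1b, hT3b, hT2b, hRic, hRa, hRb, hU1, hU2, hU3, hCsym, hZ, hW]

section calc_helpers
variable {f h : (Fin d → ℝ) → ℝ} {x : Fin d → ℝ} {i : Fin d}

lemma spd_add (hf : DifferentiableAt ℝ f x) (hh : DifferentiableAt ℝ h x) :
    spd (fun y => f y + h y) i x = spd f i x + spd h i x := by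
  unfold spd; rw [fderiv_fun_add hf hh]; rfl

lemma spd_sub (hf : DifferentiableAt ℝ f x) (hh : DifferentiableAt ℝ h x) :
    spd (fun y => f y - h y) i x = spd f i x - spd h i x := by
  unfold spd; rw [fderiv_fun_sub hf hh]; rfl

lemma spd_mul (hf : DifferentiableAt ℝ f x) (hh : DifferentiableAt ℝ h x) :
    spd (fun y => f y * h y) i x = spd f i x * h x + f x * spd h i x := by
  unfold spd; rw [fderiv_fun_mul hf hh]
  simp [ContinuousLinearMap.add_apply, ContinuousLinearMap.smul_apply]
  ring

lemma spd_div_const (hf : DifferentiableAt ℝ f x) (c : ℝ) :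
    spd (fun y => f y / c) i x = spd f i x / c := by
  unfold spd
  rw [show (fun y => f y / c) = fun y => f y * c⁻¹ by funext y; rw [div_eq_mul_inv],
    fderiv_mul_const hf]
  simp [div_eq_mul_inv, mul_comm]

lemma spd_sum {ι : Type*} (s : Finset ι) (F : ι → (Fin d → ℝ) → ℝ)
    (hF : ∀ j ∈ s, DifferentiableAt ℝ (F j) x) :
    spd (fun y => ∑ j ∈ s, F j y) i x = ∑ j ∈ s, spd (F j) i x := by
  unfold spd; rw [fderiv_fun_sum hF]; simp

end calc_helpers

lemma contDiff_spd {f : (Fin d → ℝ) → ℝ} (hf : ContDiff ℝ (⊤ : ℕ∞) f) (i : Fin d) :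
    ContDiff ℝ (⊤ : ℕ∞) (spd f i) :=
  (hf.fderiv_right (by simp)).clm_apply contDiff_const

lemma spd_comm {f : (Fin d → ℝ) → ℝ} (hf : ContDiff ℝ (⊤ : ℕ∞) f) (i j : Fin d) (x : Fin d → ℝ) :
    spd (spd f j) i x = spd (spd f i) j x := by
  have hsymm : IsSymmSndFDerivAt ℝ f x := by
    apply hf.contDiffAt.isSymmSndFDerivAt
    rw [minSmoothness_of_isRCLikeNormedField]
    exact WithTop.coe_le_coe.mpr le_top
  have hdf : DifferentiableAt ℝ (fderiv ℝ f) x :=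
    ((hf.fderiv_right (m := ((⊤ : ℕ∞) : WithTop ℕ∞)) (by exact_mod_cast le_top)).differentiable (by simp)).differentiableAt
  have key : ∀ v : Fin d, spd (spd f v) i x
      = fderiv ℝ (fderiv ℝ f) x (Pi.single i 1) (Pi.single v 1) := by
    intro v
    unfold spd
    rw [fderiv_clm_apply hdf (differentiableAt_const _)]
    simp
  have key2 : ∀ v : Fin d, spd (spd f v) j x
      = fderiv ℝ (fderiv ℝ f) x (Pi.single j 1) (Pi.single v 1) := by
    intro v
    unfold spd
    rw [fderiv_clm_apply hdf (differentiableAt_const _)]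
    simp
  rw [key j, key2 i]
  exact hsymm _ _

lemma mhe_contDiff_prod {ι : Type*} (s : Finset ι) (F : ι → (Fin d → ℝ) → ℝ)
    (h : ∀ j, ContDiff ℝ (⊤ : ℕ∞) (F j)) :
    ContDiff ℝ (⊤ : ℕ∞) (fun x => ∏ j ∈ s, F j x) := by
  classical
  induction s using Finset.cons_induction with
  | empty => simpa using contDiff_const
  | cons a s ha ih =>
      have e : (fun x => ∏ j ∈ Finset.cons a s ha, F j x) = fun x => F a x * ∏ j ∈ s, F j x := by
        funext x; rw [Finset.prod_cons]
      rw [e]; exact (h a).mul ih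

lemma mhe_contDiff_det {M : (Fin d → ℝ) → Matrix (Fin d) (Fin d) ℝ}
    (h : ∀ i j, ContDiff ℝ (⊤ : ℕ∞) fun x => M x i j) : ContDiff ℝ (⊤ : ℕ∞) fun x => (M x).det := by
  have e : (fun x => (M x).det) = fun x =>
      ∑ σ : Equiv.Perm (Fin d), ((Equiv.Perm.sign σ : ℤ) : ℝ) * ∏ i, M x (σ i) i := by
    funext x; rw [Matrix.det_apply']
  rw [e]
  exact ContDiff.sum fun σ _ => contDiff_const.mul (mhe_contDiff_prod _ _ fun i => h _ _)

lemma mhe_contDiff_inv_entry {M : (Fin d → ℝ) → Matrix (Fin d) (Fin d) ℝ}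
    (h : ∀ i j, ContDiff ℝ (⊤ : ℕ∞) fun x => M x i j)
    (hM : ∀ x, IsUnit (M x).det) (α β : Fin d) :
    ContDiff ℝ (⊤ : ℕ∞) fun x => (M x)⁻¹ α β := by
  have hdet : ContDiff ℝ (⊤ : ℕ∞) fun x => (M x).det := mhe_contDiff_det h
  have hadj : ContDiff ℝ (⊤ : ℕ∞) fun x => (M x).adjugate α β := by
    have e : (fun x => (M x).adjugate α β)
        = fun x => ((M x).updateRow β (Pi.single α 1)).det := by
      funext x; rw [Matrix.adjugate_apply]
    rw [e]
    apply mhe_contDiff_det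
    intro i j
    by_cases hi : i = β
    · simp only [hi, Matrix.updateRow_self]; exact contDiff_const
    · simp only [Matrix.updateRow_ne hi]; exact h i j
  have e : (fun x => (M x)⁻¹ α β) = fun x => ((M x).det)⁻¹ * (M x).adjugate α β := by
    funext x
    rw [Matrix.inv_def, Matrix.smul_apply, Ring.inverse_eq_inv', smul_eq_mul]
  rw [e]
  exact (hdet.inv fun x => (hM x).ne_zero).mul hadj

section main
variable (g : ℝ → (Fin d → ℝ) → Matrix (Fin d) (Fin d) ℝ) (t : ℝ)

-- smoothness of derived objects
lemma hBsm (hg_smooth : ∀ t α β, ContDiff ℝ (⊤ : ℕ∞) (fun x => g t x α β))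
    (hg_inv : ∀ t x, IsUnit (g t x).det) (α β : Fin d) :
    ContDiff ℝ (⊤ : ℕ∞) (tgInvEntry g t α β) :=
  mhe_contDiff_inv_entry (fun i j => hg_smooth t i j) (hg_inv t) α β

lemma hGlsm (hg_smooth : ∀ t α β, ContDiff ℝ (⊤ : ℕ∞) (fun x => g t x α β)) (α β σ : Fin d) :
    ContDiff ℝ (⊤ : ℕ∞) (tChrLow g t α β σ) :=
  (((contDiff_spd (hg_smooth t β σ) α).add (contDiff_spd (hg_smooth t α σ) β)).sub
    (contDiff_spd (hg_smooth t α β) σ)).div_const 2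

end main


section main2
variable {g : ℝ → (Fin d → ℝ) → Matrix (Fin d) (Fin d) ℝ} {t : ℝ}

lemma hdelta (hg_inv : ∀ t x, IsUnit (g t x).det) (y : Fin d → ℝ) (σ ρ : Fin d) :
    (∑ γ, g t y σ γ * tgInvEntry g t γ ρ y) = if σ = ρ then 1 else 0 := by
  have h := Matrix.mul_nonsing_inv (g t y) (hg_inv t y)
  have h2 := congrFun (congrFun h σ) ρ
  rw [Matrix.mul_apply] at h2
  rw [show (∑ γ, g t y σ γ * tgInvEntry g t γ ρ y)
      = ∑ γ, g t y σ γ * (g t y)⁻¹ γ ρ from rfl, h2, Matrix.one_apply]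

lemma hVlx (hg_inv : ∀ t x, IsUnit (g t x).det) (σ0 : Fin d) (y : Fin d → ℝ) :
    tVlow g t σ0 y = ∑ α, ∑ β, tgInvEntry g t α β y * tChrLow g t α β σ0 y := by
  unfold tVlow tVup tChrUp
  simp only [Finset.mul_sum]
  rw [Finset.sum_comm]
  refine Finset.sum_congr rfl fun α _ => ?_
  rw [Finset.sum_comm]
  refine Finset.sum_congr rfl fun β _ => ?_
  rw [Finset.sum_comm]
  have hcollapse : ∀ ρ : Fin d,
      (∑ γ, g t y σ0 γ * (tgInvEntry g t α β y * (tgInvEntry g t γ ρ y * tChrLow g t α β ρ y)))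
      = (if σ0 = ρ then 1 else 0) * (tgInvEntry g t α β y * tChrLow g t α β ρ y) := by
    intro ρ
    rw [← hdelta hg_inv y σ0 ρ, Finset.sum_mul]
    exact Finset.sum_congr rfl fun γ _ => by ring
  rw [Finset.sum_congr rfl fun ρ _ => hcollapse ρ]
  simp [Finset.sum_ite_eq, ite_mul]

end main2


section main3
variable {g : ℝ → (Fin d → ℝ) → Matrix (Fin d) (Fin d) ℝ} {t : ℝ}

lemma hdGl_eq (hg_smooth : ∀ t α β, ContDiff ℝ (⊤ : ℕ∞) (fun x => g t x α β))
    (i α β σ : Fin d) (x : Fin d → ℝ) :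
    spd (tChrLow g t α β σ) i x
      = (spd (spd (tgEntry g t β σ) α) i x + spd (spd (tgEntry g t α σ) β) i x
          - spd (spd (tgEntry g t α β) σ) i x) / 2 := by
  have d1 : DifferentiableAt ℝ (spd (tgEntry g t β σ) α) x :=
    ((contDiff_spd (hg_smooth t β σ) α).differentiable (by simp)).differentiableAt
  have d2 : DifferentiableAt ℝ (spd (tgEntry g t α σ) β) x :=
    ((contDiff_spd (hg_smooth t α σ) β).differentiable (by simp)).differentiableAt
  have d3 : DifferentiableAt ℝ (spd (tgEntry g t α β) σ) x :=
    ((contDiff_spd (hg_smooth t α β) σ).differentiable (by simp)).differentiableAt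
  have e : tChrLow g t α β σ = fun y =>
      (spd (tgEntry g t β σ) α y + spd (tgEntry g t α σ) β y
        - spd (tgEntry g t α β) σ y) / 2 := rfl
  rw [e, spd_div_const (f := fun y => spd (tgEntry g t β σ) α y + spd (tgEntry g t α σ) β y
        - spd (tgEntry g t α β) σ y) ((d1.add d2).sub d3), spd_sub (f := fun y => spd (tgEntry g t β σ) α y + spd (tgEntry g t α σ) β y)
        (d1.add d2) d3, spd_add d1 d2]

lemma hdV_eq (hg_smooth : ∀ t α β, ContDiff ℝ (⊤ : ℕ∞) (fun x => g t x α β))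
    (hg_inv : ∀ t x, IsUnit (g t x).det) (i σ0 : Fin d) (x : Fin d → ℝ) :
    spd (tVlow g t σ0) i x
      = ∑ α, ∑ β, (spd (tgInvEntry g t α β) i x * tChrLow g t α β σ0 x
          + tgInvEntry g t α β x * spd (tChrLow g t α β σ0) i x) := by
  have hfun : tVlow g t σ0 = fun y =>
      ∑ α, ∑ β, tgInvEntry g t α β y * tChrLow g t α β σ0 y :=
    funext fun y => hVlx hg_inv σ0 y
  have hin : ∀ α β : Fin d, DifferentiableAt ℝ
      (fun y => tgInvEntry g t α β y * tChrLow g t α β σ0 y) x :=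
    fun α β => (((hBsm g t hg_smooth hg_inv α β).mul (hGlsm g t hg_smooth α β σ0)).differentiable
      (by simp)).differentiableAt
  have hout : ∀ α : Fin d, DifferentiableAt ℝ
      (fun y => ∑ β, tgInvEntry g t α β y * tChrLow g t α β σ0 y) x := by
    intro α
    exact ((ContDiff.sum fun β _ => (hBsm g t hg_smooth hg_inv α β).mul
      (hGlsm g t hg_smooth α β σ0)).differentiable (by simp)).differentiableAt
  rw [hfun, spd_sum Finset.univ _ (fun α _ => hout α)]
  refine Finset.sum_congr rfl fun α _ => ?_
  rw [spd_sum Finset.univ _ (fun β _ => hin α β)]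
  refine Finset.sum_congr rfl fun β _ => ?_
  exact spd_mul (((hBsm g t hg_smooth hg_inv α β).differentiable (by simp)).differentiableAt)
    (((hGlsm g t hg_smooth α β σ0).differentiable (by simp)).differentiableAt)

end main3


section main4
open Matrix
variable {g : ℝ → (Fin d → ℝ) → Matrix (Fin d) (Fin d) ℝ} {t : ℝ}

lemma hEntry_sym (hg_sym : ∀ t x α β, g t x α β = g t x β α) (α β : Fin d) :
    tgEntry g t α β = tgEntry g t β α :=
  funext fun y => hg_sym t y α β

lemma hInv_sym (hg_sym : ∀ t x α β, g t x α β = g t x β α)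
    (x : Fin d → ℝ) (α β : Fin d) :
    tgInvEntry g t α β x = tgInvEntry g t β α x := by
  have hM : (g t x)ᵀ = g t x := Matrix.ext fun i j => hg_sym t x j i
  have hI : ((g t x)⁻¹)ᵀ = (g t x)⁻¹ := by
    rw [Matrix.transpose_nonsing_inv, hM]
  have := congrFun (congrFun hI β) α
  simpa [Matrix.transpose_apply, tgInvEntry] using this

lemma hChr_sym (hg_sym : ∀ t x α β, g t x α β = g t x β α)
    (x : Fin d → ℝ) (α β σ : Fin d) :
    tChrLow g t α β σ x = tChrLow g t β α σ x := by
  unfold tChrLow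
  rw [show tgEntry g t β α = tgEntry g t α β from (hEntry_sym hg_sym α β).symm]
  ring

end main4

/-- in the heat coordinate gauge `g^{αβ}Γ^γ_{αβ} = V^γ`, the
evolution law `∂_t g_{αβ} = 2 Im(ψ conj(λ_{αβ})) + ∇_α V_β + ∇_β V_α` implies
the parabolic equation
`∂_t g_{μν} − g^{αβ}∂²_{αβ} g_{μν} = 2 Ric_{μν} + 2 Im(ψ conj(λ_{μν}))
  − 2 g^{αβ} Γ_{μβ,σ} Γ^σ_{αν} + ∂_μ g^{αβ} Γ_{αβ,ν} + ∂_ν g^{αβ} Γ_{αβ,μ}`. -/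
theorem metric_heat_equation (d : ℕ) (hd : 2 ≤ d)
    (g : ℝ → (Fin d → ℝ) → Matrix (Fin d) (Fin d) ℝ)
    (lam : Fin d → Fin d → ℝ → (Fin d → ℝ) → ℂ)
    (hg_sym : ∀ t x α β, g t x α β = g t x β α)
    (hlam_sym : ∀ α β, lam α β = lam β α)
    (hg_inv : ∀ t x, IsUnit (g t x).det)
    (hg_smooth : ∀ t α β, ContDiff ℝ (⊤ : ℕ∞) (fun x => g t x α β))
    (hg_t : ∀ x α β, Differentiable ℝ (fun t => g t x α β))
    (hevol : ∀ t x α β,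
      deriv (fun s => g s x α β) t =
        2 * (tPsi g lam t x * (starRingEnd ℂ) (lam α β t x)).im
          + tCovV g t α β x + tCovV g t β α x) :
    ∀ t x μ ν,
      deriv (fun s => g s x μ ν) t
          - ∑ α, ∑ β, tgInvEntry g t α β x *
              spd (fun y => spd (tgEntry g t μ ν) β y) α x =
        2 * tRicci g t μ ν x
          + 2 * (tPsi g lam t x * (starRingEnd ℂ) (lam μ ν t x)).im
          - 2 * ∑ α, ∑ β, ∑ σ, tgInvEntry g t α β x *
              tChrLow g t μ β σ x * tChrUp g t σ α ν x
          + ∑ α, ∑ β, spd (tgInvEntry g t α β) μ x * tChrLow g t α β ν x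
          + ∑ α, ∑ β, spd (tgInvEntry g t α β) ν x * tChrLow g t α β μ x := by

  intro t x μ ν
  have hbs : ∀ α β : Fin d, tgInvEntry g t α β x = tgInvEntry g t β α x :=
    hInv_sym hg_sym x
  have hGls : ∀ α β σ : Fin d, tChrLow g t α β σ x = tChrLow g t β α σ x :=
    hChr_sym hg_sym x
  have hds : ∀ i j α β : Fin d,
      spd (spd (tgEntry g t α β) j) i x = spd (spd (tgEntry g t β α) j) i x := by
    intro i j α β
    rw [hEntry_sym hg_sym α β]
  have hdc : ∀ i j α β : Fin d,
      spd (spd (tgEntry g t α β) j) i x = spd (spd (tgEntry g t α β) i) j x :=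
    fun i j α β => spd_comm (hg_smooth t α β) i j x
  have hkey := key_algebra (fun α β => tgInvEntry g t α β x)
    (fun i α β => spd (tgInvEntry g t α β) i x)
    (fun i j α β => spd (spd (tgEntry g t α β) j) i x)
    (fun α β σ => tChrLow g t α β σ x)
    (fun i α β σ => spd (tChrLow g t α β σ) i x)
    (fun γ α β => tChrUp g t γ α β x)
    (fun σ => ∑ α, ∑ β, tgInvEntry g t α β x * tChrLow g t α β σ x)
    hbs hGls hds hdc
    (fun i α β σ => hdGl_eq hg_smooth i α β σ x)
    (fun γ α β => rfl) (fun σ => rfl) μ ν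
  beta_reduce at hkey
  have hCov : ∀ μ' ν' : Fin d, tCovV g t μ' ν' x
      = (∑ α, ∑ β, (spd (tgInvEntry g t α β) μ' x * tChrLow g t α β ν' x
          + tgInvEntry g t α β x * spd (tChrLow g t α β ν') μ' x))
        - ∑ σ, tChrUp g t σ μ' ν' x *
            (∑ α, ∑ β, tgInvEntry g t α β x * tChrLow g t α β σ x) := by
    intro μ' ν'
    unfold tCovV
    rw [hdV_eq hg_smooth hg_inv μ' ν' x]
    congr 1
    exact Finset.sum_congr rfl fun σ _ => by rw [hVlx hg_inv σ x]
  have hRic : tRicci g t μ ν x = ∑ σ, ∑ γ, tgInvEntry g t σ γ x *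
      (spd (tChrLow g t ν μ γ) σ x - spd (tChrLow g t σ μ γ) ν x
        + ∑ m, tChrUp g t m ν γ x * tChrLow g t σ μ m x
        - ∑ m, tChrUp g t m σ γ x * tChrLow g t ν μ m x) := rfl
  have hLap : (∑ α, ∑ β, tgInvEntry g t α β x *
        spd (fun y => spd (tgEntry g t μ ν) β y) α x)
      = ∑ α, ∑ β, tgInvEntry g t α β x * spd (spd (tgEntry g t μ ν) β) α x := rfl
  rw [hevol t x μ ν]
  linarith [hkey, hCov μ ν, hCov ν μ, hRic, hLap]

end
end

section
/- Assume the normal connection coefficients A_α satisfy the heat-gauge condition ∇^α A_α = B, the curvature relations ∇_α A_β − ∇_β A_α = Im(λ^γ_α conj(λ_{βγ})) and ∂_t A_α − ∂_α B = Re(λ_α^γ conj(∂^A_γ ψ)) − Im(λ^γ_α conj(λ_{γσ})) V^σ. Then A solves the parabolic equation (∂_t − ∇_σ ∇^σ) A_α = ∇^σ Im(λ^γ_α conj(λ_{σγ})) − Ric_{αδ} A^δ + Re(λ^γ_α conj(∇^A_γ ψ)) − Im(λ^γ_α conj(λ_{γσ})) V^σ. -/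
noncomputable section

open Complex

variable {d : ℕ}

/-- Covariant derivative of a 1-form: `∇_α A_β = ∂_α A_β − Γ^σ_{αβ} A_σ`. -/
def tCovA (g : ℝ → (Fin d → ℝ) → Matrix (Fin d) (Fin d) ℝ)
    (A : ℝ → (Fin d → ℝ) → Fin d → ℝ) (t : ℝ) (α β : Fin d) (x : Fin d → ℝ) : ℝ :=
  spd (fun y => A t y β) α x - ∑ σ, tChrUp g t σ α β x * A t x σ

/-- The temporal connection component in the heat gauge: `B = ∇^α A_α`. -/
def tBgauge (g : ℝ → (Fin d → ℝ) → Matrix (Fin d) (Fin d) ℝ)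
    (A : ℝ → (Fin d → ℝ) → Fin d → ℝ) (t : ℝ) (x : Fin d → ℝ) : ℝ :=
  ∑ α, ∑ β, tgInvEntry g t α β x * tCovA g A t α β x

/-- Second covariant derivative `∇_σ ∇_μ A_α` of a 1-form. -/
def tCov2A (g : ℝ → (Fin d → ℝ) → Matrix (Fin d) (Fin d) ℝ)
    (A : ℝ → (Fin d → ℝ) → Fin d → ℝ) (t : ℝ) (σ μ α : Fin d) (x : Fin d → ℝ) : ℝ :=
  spd (fun y => tCovA g A t μ α y) σ x
    - ∑ ν, tChrUp g t ν σ μ x * tCovA g A t ν α x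
    - ∑ ν, tChrUp g t ν σ α x * tCovA g A t μ ν x

/-- Raised second fundamental form `λ_α^γ = g^{γσ} λ_{ασ}`. -/
def tLamUp (g : ℝ → (Fin d → ℝ) → Matrix (Fin d) (Fin d) ℝ)
    (lam : Fin d → Fin d → ℝ → (Fin d → ℝ) → ℂ) (t : ℝ) (α γ : Fin d)
    (x : Fin d → ℝ) : ℂ :=
  ∑ σ, (tgInvEntry g t γ σ x : ℝ) * lam α σ t x

/-- The 2-tensor `T_{σα} = Im(λ^γ_α conj(λ_{σγ}))`. -/
def tTT (g : ℝ → (Fin d → ℝ) → Matrix (Fin d) (Fin d) ℝ)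
    (lam : Fin d → Fin d → ℝ → (Fin d → ℝ) → ℂ) (t : ℝ) (σ α : Fin d)
    (x : Fin d → ℝ) : ℝ :=
  (∑ γ, tLamUp g lam t α γ x * (starRingEnd ℂ) (lam σ γ t x)).im

/-- Covariant divergence `∇^σ T_{σα}` of the 2-tensor `T`. -/
def tCovDivT (g : ℝ → (Fin d → ℝ) → Matrix (Fin d) (Fin d) ℝ)
    (lam : Fin d → Fin d → ℝ → (Fin d → ℝ) → ℂ) (t : ℝ) (α : Fin d)
    (x : Fin d → ℝ) : ℝ :=
  ∑ σ, ∑ μ, tgInvEntry g t σ μ x *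
    (spd (fun y => tTT g lam t σ α y) μ x
      - ∑ ν, tChrUp g t ν μ σ x * tTT g lam t ν α x
      - ∑ ν, tChrUp g t ν μ α x * tTT g lam t σ ν x)

/-- The covariant derivative `∇^A_γ ψ = ∂_γ ψ + i A_γ ψ`. -/
def tCovPsi (g : ℝ → (Fin d → ℝ) → Matrix (Fin d) (Fin d) ℝ)
    (lam : Fin d → Fin d → ℝ → (Fin d → ℝ) → ℂ)
    (A : ℝ → (Fin d → ℝ) → Fin d → ℝ) (t : ℝ) (γ : Fin d) (x : Fin d → ℝ) : ℂ :=
  fderiv ℝ (fun y => tPsi g lam t y) x (Pi.single γ 1)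
    + Complex.I * (A t x γ : ℝ) * tPsi g lam t x

namespace ConnHeat
open Finset
variable {d : ℕ}

lemma spd_add {u v : (Fin d → ℝ) → ℝ} {x : Fin d → ℝ} (hu : DifferentiableAt ℝ u x)
    (hv : DifferentiableAt ℝ v x) (i : Fin d) :
    spd (fun y => u y + v y) i x = spd u i x + spd v i x := by
  unfold spd; rw [fderiv_fun_add hu hv]; rfl

lemma spd_sub {u v : (Fin d → ℝ) → ℝ} {x : Fin d → ℝ} (hu : DifferentiableAt ℝ u x)
    (hv : DifferentiableAt ℝ v x) (i : Fin d) :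
    spd (fun y => u y - v y) i x = spd u i x - spd v i x := by
  unfold spd; rw [fderiv_fun_sub hu hv]; rfl

lemma spd_const (c : ℝ) (i : Fin d) (x : Fin d → ℝ) : spd (fun _ => c) i x = 0 := by
  unfold spd; rw [fderiv_fun_const]; rfl

lemma spd_mul {u v : (Fin d → ℝ) → ℝ} {x : Fin d → ℝ} (hu : DifferentiableAt ℝ u x)
    (hv : DifferentiableAt ℝ v x) (i : Fin d) :
    spd (fun y => u y * v y) i x = spd u i x * v x + u x * spd v i x := by
  unfold spd; rw [fderiv_fun_mul hu hv]
  simp [mul_comm, add_comm]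

lemma spd_div_const {u : (Fin d → ℝ) → ℝ} {x : Fin d → ℝ} (c : ℝ) (i : Fin d) :
    spd (fun y => u y / c) i x = spd u i x / c := by
  unfold spd
  have : (fun y => u y / c) = fun y => u y * c⁻¹ := by funext y; ring
  rw [this]
  by_cases hu : DifferentiableAt ℝ u x
  · rw [fderiv_fun_mul hu (differentiableAt_const _)]
    simp [div_eq_mul_inv, mul_comm]
  · have h2 : ¬ DifferentiableAt ℝ (fun y => u y * c⁻¹) x ∨ c = 0 := by
      by_cases hc : c = 0
      · right; exact hc
      · left; intro hmul
        have := hmul.fun_mul (differentiableAt_const c)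
        simp only [mul_assoc, inv_mul_cancel₀ hc, mul_one] at this
        exact hu this
    rcases h2 with h2 | h2
    · rw [fderiv_zero_of_not_differentiableAt hu, fderiv_zero_of_not_differentiableAt h2]
      simp
    · simp [h2]

lemma spd_sum {ι : Type*} {s : Finset ι} {f : ι → (Fin d → ℝ) → ℝ} {x : Fin d → ℝ}
    (h : ∀ j ∈ s, DifferentiableAt ℝ (f j) x) (i : Fin d) :
    spd (fun y => ∑ j ∈ s, f j y) i x = ∑ j ∈ s, spd (f j) i x := by
  unfold spd; rw [fderiv_fun_sum h]
  simp

lemma cd_spd {u : (Fin d → ℝ) → ℝ} (hu : ContDiff ℝ (⊤ : ℕ∞) u) (i : Fin d) :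
    ContDiff ℝ (⊤ : ℕ∞) (spd u i) :=
  (hu.fderiv_right (by simp)).clm_apply contDiff_const

lemma cd_sum {ι : Type*} {s : Finset ι} {f : ι → (Fin d → ℝ) → ℝ}
    (h : ∀ j ∈ s, ContDiff ℝ (⊤ : ℕ∞) (f j)) :
    ContDiff ℝ (⊤ : ℕ∞) (fun x => ∑ j ∈ s, f j x) := by
  classical
  induction s using Finset.induction_on with
  | empty => simpa using contDiff_const
  | insert a s hj ih =>
    simp only [Finset.sum_insert hj]
    exact (h a (Finset.mem_insert_self a s)).add
      (ih fun j hjs => h j (Finset.mem_insert_of_mem hjs))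

lemma cd_prod {ι : Type*} {s : Finset ι} {f : ι → (Fin d → ℝ) → ℝ}
    (h : ∀ j ∈ s, ContDiff ℝ (⊤ : ℕ∞) (f j)) :
    ContDiff ℝ (⊤ : ℕ∞) (fun x => ∏ j ∈ s, f j x) := by
  classical
  induction s using Finset.induction_on with
  | empty => simpa using contDiff_const
  | insert a s hj ih =>
    simp only [Finset.prod_insert hj]
    exact (h a (Finset.mem_insert_self a s)).mul
      (ih fun j hjs => h j (Finset.mem_insert_of_mem hjs))

lemma spd_comm {u : (Fin d → ℝ) → ℝ} (hu : ContDiff ℝ (⊤ : ℕ∞) u) (i j : Fin d) (x : Fin d → ℝ) :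
    spd (spd u i) j x = spd (spd u j) i x := by
  have hdiff : ∀ y, HasFDerivAt u (fderiv ℝ u y) y := fun y =>
    (hu.differentiable (by simp) y).hasFDerivAt
  have h2 : HasFDerivAt (fderiv ℝ u) (fderiv ℝ (fderiv ℝ u) x) x :=
    ((hu.fderiv_right (m := (⊤ : ℕ∞)) (by simp)).differentiable (by simp) x).hasFDerivAt
  have hsym := second_derivative_symmetric hdiff h2
  have key : ∀ v : Fin d → ℝ,
      fderiv ℝ (fun y => fderiv ℝ u y v) x = (fderiv ℝ (fderiv ℝ u) x).flip v := by
    intro v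
    have := h2.clm_apply (hasFDerivAt_const v x)
    simpa using this.fderiv
  unfold spd
  rw [key, key]
  exact hsym _ _

end ConnHeat
namespace ConnHeat
open Finset Matrix
variable {d : ℕ} {g : ℝ → (Fin d → ℝ) → Matrix (Fin d) (Fin d) ℝ} {t : ℝ}

lemma g_transpose (hg_sym : ∀ x α β, g t x α β = g t x β α) (x : Fin d → ℝ) :
    (g t x)ᵀ = g t x := by
  ext i j; exact hg_sym x j i

lemma gu_symm (hg_sym : ∀ x α β, g t x α β = g t x β α) (α β : Fin d) (x : Fin d → ℝ) :
    tgInvEntry g t α β x = tgInvEntry g t β α x := by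
  unfold tgInvEntry
  conv_lhs => rw [← g_transpose hg_sym x, ← Matrix.transpose_nonsing_inv]
  rfl

lemma mul_inv_entry (hg_inv : ∀ x, IsUnit (g t x).det) (x : Fin d → ℝ) (ν μ : Fin d) :
    ∑ ρ, g t x ν ρ * tgInvEntry g t ρ μ x = if ν = μ then (1:ℝ) else 0 := by
  have h := Matrix.mul_nonsing_inv (g t x) (hg_inv x)
  have h2 := congrFun (congrFun h ν) μ
  rw [Matrix.mul_apply] at h2
  rw [show (∑ ρ, g t x ν ρ * tgInvEntry g t ρ μ x) = ∑ k, g t x ν k * (g t x)⁻¹ k μ from rfl,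
    h2, Matrix.one_apply]

lemma inv_mul_entry (hg_inv : ∀ x, IsUnit (g t x).det) (x : Fin d → ℝ) (ν μ : Fin d) :
    ∑ ρ, tgInvEntry g t ν ρ x * g t x ρ μ = if ν = μ then (1:ℝ) else 0 := by
  have h := Matrix.nonsing_inv_mul (g t x) (hg_inv x)
  have h2 := congrFun (congrFun h ν) μ
  rw [Matrix.mul_apply] at h2
  rw [show (∑ ρ, tgInvEntry g t ν ρ x * g t x ρ μ) = ∑ k, (g t x)⁻¹ ν k * g t x k μ from rfl,
    h2, Matrix.one_apply]

lemma cd_det_mat {M : (Fin d → ℝ) → Matrix (Fin d) (Fin d) ℝ}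
    (h : ∀ i j, ContDiff ℝ (⊤ : ℕ∞) fun x => M x i j) :
    ContDiff ℝ (⊤ : ℕ∞) fun x => (M x).det := by
  simp only [Matrix.det_apply]
  apply cd_sum
  intro σ _
  simp only [Units.smul_def, zsmul_eq_mul]
  exact contDiff_const.mul (cd_prod fun i _ => h (σ i) i)

lemma cd_gu (hg_inv : ∀ x, IsUnit (g t x).det)
    (hg_smooth : ∀ α β, ContDiff ℝ (⊤ : ℕ∞) (fun x => g t x α β)) (α β : Fin d) :
    ContDiff ℝ (⊤ : ℕ∞) (fun x => tgInvEntry g t α β x) := by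
  have hdet : ContDiff ℝ (⊤ : ℕ∞) fun x => (g t x).det := cd_det_mat hg_smooth
  have hne : ∀ x, (g t x).det ≠ 0 := fun x => (hg_inv x).ne_zero
  have hadj : ContDiff ℝ (⊤ : ℕ∞) fun x => (g t x).adjugate α β := by
    simp only [Matrix.adjugate_apply]
    apply cd_det_mat
    intro i j
    by_cases hij : i = β
    · simp only [Matrix.updateRow_apply, hij, if_true]
      exact contDiff_const
    · simp only [Matrix.updateRow_apply, hij, if_false]
      exact hg_smooth i j
  have : (fun x => tgInvEntry g t α β x) =
      fun x => ((g t x).det)⁻¹ * (g t x).adjugate α β := by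
    funext x
    show (g t x)⁻¹ α β = _
    rw [Matrix.inv_def]
    simp [Ring.inverse_eq_inv']
  rw [this]
  exact (hdet.inv hne).mul hadj

end ConnHeat
namespace ConnHeat
open Finset Matrix
variable {d : ℕ} {g : ℝ → (Fin d → ℝ) → Matrix (Fin d) (Fin d) ℝ} {t : ℝ}

lemma cd_chrLow (hg_smooth : ∀ α β, ContDiff ℝ (⊤ : ℕ∞) (fun x => g t x α β)) (α β σ : Fin d) :
    ContDiff ℝ (⊤ : ℕ∞) (fun x => tChrLow g t α β σ x) := by
  unfold tChrLow
  exact (((cd_spd (hg_smooth β σ) α).add (cd_spd (hg_smooth α σ) β)).sub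
    (cd_spd (hg_smooth α β) σ)).div_const 2

lemma cd_chrUp (hg_inv : ∀ x, IsUnit (g t x).det)
    (hg_smooth : ∀ α β, ContDiff ℝ (⊤ : ℕ∞) (fun x => g t x α β)) (γ α β : Fin d) :
    ContDiff ℝ (⊤ : ℕ∞) (fun x => tChrUp g t γ α β x) := by
  unfold tChrUp
  exact cd_sum fun σ _ => (cd_gu hg_inv hg_smooth γ σ).mul (cd_chrLow hg_smooth α β σ)

lemma tgEntry_symm (hg_sym : ∀ x α β, g t x α β = g t x β α) (α β : Fin d) :
    tgEntry g t α β = tgEntry g t β α :=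
  funext fun x => hg_sym x α β

lemma chrLow_symm (hg_sym : ∀ x α β, g t x α β = g t x β α) (α β σ : Fin d) (x : Fin d → ℝ) :
    tChrLow g t α β σ x = tChrLow g t β α σ x := by
  unfold tChrLow
  rw [tgEntry_symm hg_sym α β]
  ring

lemma chrUp_symm (hg_sym : ∀ x α β, g t x α β = g t x β α) (γ α β : Fin d) (x : Fin d → ℝ) :
    tChrUp g t γ α β x = tChrUp g t γ β α x := by
  unfold tChrUp
  exact Finset.sum_congr rfl fun σ _ => by rw [chrLow_symm hg_sym]

lemma chrLow_compat (hg_sym : ∀ x α β, g t x α β = g t x β α) (a ν ρ : Fin d) (x : Fin d → ℝ) :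
    tChrLow g t a ν ρ x + tChrLow g t a ρ ν x = spd (tgEntry g t ν ρ) a x := by
  unfold tChrLow
  rw [tgEntry_symm hg_sym ρ ν]
  ring

lemma spd_gu (hg_inv : ∀ x, IsUnit (g t x).det)
    (hg_smooth : ∀ α β, ContDiff ℝ (⊤ : ℕ∞) (fun x => g t x α β))
    (a σ μ : Fin d) (x : Fin d → ℝ) :
    spd (fun y => tgInvEntry g t σ μ y) a x
      = -∑ ν, ∑ ρ, tgInvEntry g t σ ν x * spd (tgEntry g t ν ρ) a x * tgInvEntry g t ρ μ x := by
  have dgl : ∀ ν ρ, DifferentiableAt ℝ (fun y => g t y ν ρ) x := fun ν ρ =>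
    (hg_smooth ν ρ).differentiable (by simp) x
  have dgu : ∀ ν ρ, DifferentiableAt ℝ (fun y => tgInvEntry g t ν ρ y) x := fun ν ρ =>
    (cd_gu hg_inv hg_smooth ν ρ).differentiable (by simp) x
  have H : ∀ ν' μ', ∑ ρ, (spd (tgEntry g t ν' ρ) a x * tgInvEntry g t ρ μ' x
      + g t x ν' ρ * spd (fun y => tgInvEntry g t ρ μ' y) a x) = 0 := by
    intro ν' μ'
    have hfun : (fun y => ∑ ρ, g t y ν' ρ * tgInvEntry g t ρ μ' y)
        = fun _ => if ν' = μ' then (1:ℝ) else 0 :=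
      funext fun y => mul_inv_entry hg_inv y ν' μ'
    have h0 : spd (fun y => ∑ ρ, g t y ν' ρ * tgInvEntry g t ρ μ' y) a x = 0 := by
      rw [hfun, spd_const]
    rw [spd_sum (fun ρ _ => (dgl ν' ρ).fun_mul (dgu ρ μ'))] at h0
    rw [← h0]
    exact Finset.sum_congr rfl fun ρ _ => (spd_mul (dgl ν' ρ) (dgu ρ μ') a).symm
  have key : ∀ ρ', ∑ ν, g t x ρ' ν * spd (fun y => tgInvEntry g t ν μ y) a x
      = -∑ ν, spd (tgEntry g t ρ' ν) a x * tgInvEntry g t ν μ x := by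
    intro ρ'
    have := H ρ' μ
    rw [Finset.sum_add_distrib] at this
    linarith
  calc spd (fun y => tgInvEntry g t σ μ y) a x
      = ∑ ν, (if σ = ν then (1:ℝ) else 0) * spd (fun y => tgInvEntry g t ν μ y) a x := by
        simp
    _ = ∑ ν, (∑ ρ, tgInvEntry g t σ ρ x * g t x ρ ν) * spd (fun y => tgInvEntry g t ν μ y) a x := by
        refine Finset.sum_congr rfl fun ν _ => ?_
        rw [inv_mul_entry hg_inv x σ ν]
    _ = ∑ ρ, tgInvEntry g t σ ρ x * (∑ ν, g t x ρ ν * spd (fun y => tgInvEntry g t ν μ y) a x) := by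
        simp only [Finset.sum_mul, Finset.mul_sum]
        rw [Finset.sum_comm]
        exact Finset.sum_congr rfl fun ν _ => Finset.sum_congr rfl fun ρ _ => by ring
    _ = -∑ ν, ∑ ρ, tgInvEntry g t σ ν x * spd (tgEntry g t ν ρ) a x * tgInvEntry g t ρ μ x := by
        simp only [key, ← Finset.sum_neg_distrib]
        refine Finset.sum_congr rfl fun ν _ => ?_
        rw [Finset.mul_sum]
        exact Finset.sum_congr rfl fun ρ _ => by ring

end ConnHeat
namespace ConnHeat
open Finset Matrix
variable {d : ℕ} {g : ℝ → (Fin d → ℝ) → Matrix (Fin d) (Fin d) ℝ} {t : ℝ}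

lemma inv_compat (hg_sym : ∀ x α β, g t x α β = g t x β α)
    (hg_inv : ∀ x, IsUnit (g t x).det)
    (hg_smooth : ∀ α β, ContDiff ℝ (⊤ : ℕ∞) (fun x => g t x α β))
    (a σ μ : Fin d) (x : Fin d → ℝ) :
    spd (fun y => tgInvEntry g t σ μ y) a x
      + (∑ ν, tgInvEntry g t ν μ x * tChrUp g t σ a ν x)
      + (∑ ν, tgInvEntry g t σ ν x * tChrUp g t μ a ν x) = 0 := by
  have e1 : (∑ ν, tgInvEntry g t ν μ x * tChrUp g t σ a ν x)
      = ∑ ν, ∑ ρ, tgInvEntry g t σ ρ x * tgInvEntry g t ν μ x * tChrLow g t a ν ρ x := by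
    unfold tChrUp
    refine Finset.sum_congr rfl fun ν _ => ?_
    rw [Finset.mul_sum]
    exact Finset.sum_congr rfl fun ρ _ => by ring
  have e2 : (∑ ν, tgInvEntry g t σ ν x * tChrUp g t μ a ν x)
      = ∑ ν, ∑ ρ, tgInvEntry g t σ ρ x * tgInvEntry g t ν μ x * tChrLow g t a ρ ν x := by
    unfold tChrUp
    rw [show (∑ ν, tgInvEntry g t σ ν x * ∑ ρ, tgInvEntry g t μ ρ x * tChrLow g t a ν ρ x)
        = ∑ ν, ∑ ρ, tgInvEntry g t σ ν x * tgInvEntry g t μ ρ x * tChrLow g t a ν ρ x from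
      Finset.sum_congr rfl fun ν _ => by
        rw [Finset.mul_sum]; exact Finset.sum_congr rfl fun ρ _ => by ring]
    rw [Finset.sum_comm]
    refine Finset.sum_congr rfl fun ν _ => Finset.sum_congr rfl fun ρ _ => ?_
    rw [gu_symm hg_sym μ ν]
  have e0 : spd (fun y => tgInvEntry g t σ μ y) a x
      = -∑ ν, ∑ ρ, tgInvEntry g t σ ρ x * tgInvEntry g t ν μ x * spd (tgEntry g t ν ρ) a x := by
    rw [spd_gu hg_inv hg_smooth]
    congr 1
    rw [Finset.sum_comm]
    refine Finset.sum_congr rfl fun ν _ => Finset.sum_congr rfl fun ρ _ => ?_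
    rw [tgEntry_symm hg_sym ρ ν]
    ring
  rw [e0, e1, e2]
  have combine : (∑ ν, ∑ ρ, tgInvEntry g t σ ρ x * tgInvEntry g t ν μ x * tChrLow g t a ν ρ x)
      + (∑ ν, ∑ ρ, tgInvEntry g t σ ρ x * tgInvEntry g t ν μ x * tChrLow g t a ρ ν x)
      = ∑ ν, ∑ ρ, tgInvEntry g t σ ρ x * tgInvEntry g t ν μ x * spd (tgEntry g t ν ρ) a x := by
    rw [← Finset.sum_add_distrib]
    refine Finset.sum_congr rfl fun ν _ => ?_
    rw [← Finset.sum_add_distrib]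
    refine Finset.sum_congr rfl fun ρ _ => ?_
    rw [← chrLow_compat hg_sym a ν ρ x]
    ring
  linarith [combine]

end ConnHeat
namespace ConnHeat
open Finset Matrix
variable {d : ℕ} {g : ℝ → (Fin d → ℝ) → Matrix (Fin d) (Fin d) ℝ}
  {A : ℝ → (Fin d → ℝ) → Fin d → ℝ} {t : ℝ}

lemma sum_swap13 (F : Fin d → Fin d → Fin d → ℝ) :
    (∑ σ, ∑ μ, ∑ ν, F σ μ ν) = ∑ σ, ∑ μ, ∑ ν, F ν μ σ := by
  rw [show (∑ σ, ∑ μ, ∑ ν, F σ μ ν) = ∑ σ, ∑ ν, ∑ μ, F σ μ ν from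
    Finset.sum_congr rfl fun σ _ => Finset.sum_comm]
  rw [Finset.sum_comm]
  exact Finset.sum_congr rfl fun ν _ => Finset.sum_comm

lemma sum_swap23 (F : Fin d → Fin d → Fin d → ℝ) :
    (∑ σ, ∑ μ, ∑ ν, F σ μ ν) = ∑ σ, ∑ μ, ∑ ν, F σ ν μ :=
  Finset.sum_congr rfl fun σ _ => Finset.sum_comm

lemma cd_covA (hg_inv : ∀ x, IsUnit (g t x).det)
    (hg_smooth : ∀ α β, ContDiff ℝ (⊤ : ℕ∞) (fun x => g t x α β))
    (hA_smooth : ∀ α, ContDiff ℝ (⊤ : ℕ∞) (fun x => A t x α)) (α β : Fin d) :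
    ContDiff ℝ (⊤ : ℕ∞) (fun x => tCovA g A t α β x) := by
  unfold tCovA
  exact (cd_spd (hA_smooth β) α).sub
    (cd_sum fun σ _ => (cd_chrUp hg_inv hg_smooth σ α β).mul (hA_smooth σ))

lemma spd_B (hg_sym : ∀ x α β, g t x α β = g t x β α)
    (hg_inv : ∀ x, IsUnit (g t x).det)
    (hg_smooth : ∀ α β, ContDiff ℝ (⊤ : ℕ∞) (fun x => g t x α β))
    (hA_smooth : ∀ α, ContDiff ℝ (⊤ : ℕ∞) (fun x => A t x α)) (α : Fin d) (x : Fin d → ℝ) :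
    spd (fun y => tBgauge g A t y) α x
      = ∑ σ, ∑ μ, tgInvEntry g t σ μ x * tCov2A g A t α σ μ x := by
  have dgu : ∀ ν ρ, DifferentiableAt ℝ (fun y => tgInvEntry g t ν ρ y) x := fun ν ρ =>
    (cd_gu hg_inv hg_smooth ν ρ).differentiable (by simp) x
  have dcov : ∀ ν ρ, DifferentiableAt ℝ (fun y => tCovA g A t ν ρ y) x := fun ν ρ =>
    (cd_covA hg_inv hg_smooth hA_smooth ν ρ).differentiable (by simp) x
  have step1 : spd (fun y => tBgauge g A t y) α x
      = ∑ σ, ∑ μ, (spd (fun y => tgInvEntry g t σ μ y) α x * tCovA g A t σ μ x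
          + tgInvEntry g t σ μ x * spd (fun y => tCovA g A t σ μ y) α x) := by
    rw [show (fun y => tBgauge g A t y)
        = fun y => ∑ σ, ∑ μ, tgInvEntry g t σ μ y * tCovA g A t σ μ y from rfl]
    rw [spd_sum (fun σ _ => DifferentiableAt.fun_sum fun μ _ => (dgu σ μ).fun_mul (dcov σ μ)) α]
    refine Finset.sum_congr rfl fun σ _ => ?_
    rw [spd_sum (fun μ _ => (dgu σ μ).fun_mul (dcov σ μ)) α]
    exact Finset.sum_congr rfl fun μ _ => spd_mul (dgu σ μ) (dcov σ μ) α
  rw [step1]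
  -- substitute inv_compat for spd gu
  have step2 : ∀ σ μ, spd (fun y => tgInvEntry g t σ μ y) α x * tCovA g A t σ μ x
      = -(∑ ν, tgInvEntry g t ν μ x * tChrUp g t σ α ν x * tCovA g A t σ μ x)
        - (∑ ν, tgInvEntry g t σ ν x * tChrUp g t μ α ν x * tCovA g A t σ μ x) := by
    intro σ μ
    have h := inv_compat hg_sym hg_inv hg_smooth α σ μ x
    have : spd (fun y => tgInvEntry g t σ μ y) α x
        = -(∑ ν, tgInvEntry g t ν μ x * tChrUp g t σ α ν x)
          - (∑ ν, tgInvEntry g t σ ν x * tChrUp g t μ α ν x) := by linarith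
    rw [this, sub_mul, neg_mul, Finset.sum_mul, Finset.sum_mul]
  simp only [step2]
  -- expand tCov2A on the right
  unfold tCov2A
  have expand : ∀ σ μ : Fin d, tgInvEntry g t σ μ x *
      (spd (fun y => tCovA g A t σ μ y) α x
        - ∑ ν, tChrUp g t ν α σ x * tCovA g A t ν μ x
        - ∑ ν, tChrUp g t ν α μ x * tCovA g A t σ ν x)
      = tgInvEntry g t σ μ x * spd (fun y => tCovA g A t σ μ y) α x
        - (∑ ν, tgInvEntry g t σ μ x * tChrUp g t ν α σ x * tCovA g A t ν μ x)
        - (∑ ν, tgInvEntry g t σ μ x * tChrUp g t ν α μ x * tCovA g A t σ ν x) := by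
    intro σ μ
    rw [mul_sub, mul_sub, Finset.mul_sum, Finset.mul_sum]
    simp only [← mul_assoc]
  simp only [expand]
  -- compare the three double/triple sums
  have split : ∀ F G H : Fin d → Fin d → ℝ,
      (∑ σ, ∑ μ, (-F σ μ - G σ μ + H σ μ))
        = (∑ σ, ∑ μ, H σ μ) - (∑ σ, ∑ μ, F σ μ) - (∑ σ, ∑ μ, G σ μ) := by
    intro F G H
    simp only [Finset.sum_add_distrib, Finset.sum_sub_distrib, Finset.sum_neg_distrib]
    ring
  have split' : ∀ F G H : Fin d → Fin d → ℝ,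
      (∑ σ, ∑ μ, (H σ μ - F σ μ - G σ μ))
        = (∑ σ, ∑ μ, H σ μ) - (∑ σ, ∑ μ, F σ μ) - (∑ σ, ∑ μ, G σ μ) := by
    intro F G H
    simp only [Finset.sum_sub_distrib]
  rw [split (fun σ μ => ∑ ν, tgInvEntry g t ν μ x * tChrUp g t σ α ν x * tCovA g A t σ μ x)
        (fun σ μ => ∑ ν, tgInvEntry g t σ ν x * tChrUp g t μ α ν x * tCovA g A t σ μ x)
        (fun σ μ => tgInvEntry g t σ μ x * spd (fun y => tCovA g A t σ μ y) α x),
      split' (fun σ μ => ∑ ν, tgInvEntry g t σ μ x * tChrUp g t ν α σ x * tCovA g A t ν μ x)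
        (fun σ μ => ∑ ν, tgInvEntry g t σ μ x * tChrUp g t ν α μ x * tCovA g A t σ ν x)
        (fun σ μ => tgInvEntry g t σ μ x * spd (fun y => tCovA g A t σ μ y) α x)]
  rw [show (∑ σ, ∑ μ, ∑ ν, tgInvEntry g t ν μ x * tChrUp g t σ α ν x * tCovA g A t σ μ x)
      = ∑ σ, ∑ μ, ∑ ν, tgInvEntry g t σ μ x * tChrUp g t ν α σ x * tCovA g A t ν μ x from
    (sum_swap13 (fun σ μ ν => tgInvEntry g t σ μ x * tChrUp g t ν α σ x * tCovA g A t ν μ x)).symm]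
  rw [show (∑ σ, ∑ μ, ∑ ν, tgInvEntry g t σ ν x * tChrUp g t μ α ν x * tCovA g A t σ μ x)
      = ∑ σ, ∑ μ, ∑ ν, tgInvEntry g t σ μ x * tChrUp g t ν α μ x * tCovA g A t σ ν x from
    (sum_swap23 (fun σ μ ν => tgInvEntry g t σ μ x * tChrUp g t ν α μ x * tCovA g A t σ ν x)).symm]

end ConnHeat
namespace ConnHeat
open Finset Matrix
variable {d : ℕ} {g : ℝ → (Fin d → ℝ) → Matrix (Fin d) (Fin d) ℝ}
  {A : ℝ → (Fin d → ℝ) → Fin d → ℝ} {t : ℝ}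

/-- Curvature coefficient appearing in the commutator of covariant derivatives. -/
def Kup (g : ℝ → (Fin d → ℝ) → Matrix (Fin d) (Fin d) ℝ) (t : ℝ) (ν c a b : Fin d)
    (x : Fin d → ℝ) : ℝ :=
  spd (fun y => tChrUp g t ν a c y) b x - spd (fun y => tChrUp g t ν b c y) a x
    + ∑ ρ, (tChrUp g t ρ a c x * tChrUp g t ν b ρ x - tChrUp g t ρ b c x * tChrUp g t ν a ρ x)

lemma cov2_comm (hg_sym : ∀ x α β, g t x α β = g t x β α)
    (hg_inv : ∀ x, IsUnit (g t x).det)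
    (hg_smooth : ∀ α β, ContDiff ℝ (⊤ : ℕ∞) (fun x => g t x α β))
    (hA_smooth : ∀ α, ContDiff ℝ (⊤ : ℕ∞) (fun x => A t x α))
    (a b c : Fin d) (x : Fin d → ℝ) :
    tCov2A g A t a b c x - tCov2A g A t b a c x = ∑ ν, Kup g t ν c a b x * A t x ν := by
  have dA : ∀ ν, DifferentiableAt ℝ (fun y => A t y ν) x := fun ν =>
    (hA_smooth ν).differentiable (by simp) x
  have dspdA : ∀ ν i, DifferentiableAt ℝ (spd (fun y => A t y ν) i) x := fun ν i =>
    (cd_spd (hA_smooth ν) i).differentiable (by simp) x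
  have dchr : ∀ ν i j, DifferentiableAt ℝ (fun y => tChrUp g t ν i j y) x := fun ν i j =>
    (cd_chrUp hg_inv hg_smooth ν i j).differentiable (by simp) x
  have hspd2 : ∀ a' b' c', spd (fun y => tCovA g A t b' c' y) a' x
      = spd (spd (fun y => A t y c') b') a' x
        - ((∑ ν, spd (fun y => tChrUp g t ν b' c' y) a' x * A t x ν)
          + (∑ ν, tChrUp g t ν b' c' x * spd (fun y => A t y ν) a' x)) := by
    intro a' b' c'
    rw [show (fun y => tCovA g A t b' c' y)
        = fun y => spd (fun y' => A t y' c') b' y - ∑ ν, tChrUp g t ν b' c' y * A t y ν from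
      rfl]
    rw [spd_sub (dspdA c' b') (DifferentiableAt.fun_sum fun ν _ => (dchr ν b' c').fun_mul (dA ν)) a']
    rw [spd_sum (fun ν _ => (dchr ν b' c').fun_mul (dA ν)) a']
    rw [← Finset.sum_add_distrib]
    congr 1
    exact Finset.sum_congr rfl fun ν _ => spd_mul (dchr ν b' c') (dA ν) a'
  have hcovA : ∀ a' b' c', (∑ ν, tChrUp g t ν a' c' x * tCovA g A t b' ν x)
      = (∑ ν, tChrUp g t ν a' c' x * spd (fun y => A t y ν) b' x)
        - ∑ ν, ∑ ρ, tChrUp g t ν a' c' x * tChrUp g t ρ b' ν x * A t x ρ := by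
    intro a' b' c'
    rw [← Finset.sum_sub_distrib]
    refine Finset.sum_congr rfl fun ν _ => ?_
    rw [show tCovA g A t b' ν x
        = spd (fun y => A t y ν) b' x - ∑ ρ, tChrUp g t ρ b' ν x * A t x ρ from rfl]
    rw [mul_sub, Finset.mul_sum]
    simp only [← mul_assoc]
  have hD : ∀ a' b' c', tCov2A g A t a' b' c' x
      = spd (spd (fun y => A t y c') b') a' x
        - (∑ ν, spd (fun y => tChrUp g t ν b' c' y) a' x * A t x ν)
        - (∑ ν, tChrUp g t ν b' c' x * spd (fun y => A t y ν) a' x)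
        - (∑ ν, tChrUp g t ν a' b' x * tCovA g A t ν c' x)
        - (∑ ν, tChrUp g t ν a' c' x * spd (fun y => A t y ν) b' x)
        + (∑ ν, ∑ ρ, tChrUp g t ν a' c' x * tChrUp g t ρ b' ν x * A t x ρ) := by
    intro a' b' c'
    rw [show tCov2A g A t a' b' c' x
        = spd (fun y => tCovA g A t b' c' y) a' x
          - ∑ ν, tChrUp g t ν a' b' x * tCovA g A t ν c' x
          - ∑ ν, tChrUp g t ν a' c' x * tCovA g A t b' ν x from rfl]
    rw [hspd2 a' b' c', hcovA a' b' c']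
    ring
  rw [hD a b c, hD b a c]
  rw [spd_comm (hA_smooth c) b a x]
  rw [show (∑ ν, tChrUp g t ν b a x * tCovA g A t ν c x)
      = ∑ ν, tChrUp g t ν a b x * tCovA g A t ν c x from
    Finset.sum_congr rfl fun ν _ => by rw [chrUp_symm hg_sym ν b a]]
  rw [show (∑ ν, ∑ ρ, tChrUp g t ν a c x * tChrUp g t ρ b ν x * A t x ρ)
      = ∑ ν, ∑ ρ, tChrUp g t ρ a c x * tChrUp g t ν b ρ x * A t x ν from Finset.sum_comm]
  rw [show (∑ ν, ∑ ρ, tChrUp g t ν b c x * tChrUp g t ρ a ν x * A t x ρ)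
      = ∑ ν, ∑ ρ, tChrUp g t ρ b c x * tChrUp g t ν a ρ x * A t x ν from Finset.sum_comm]
  unfold Kup
  simp only [Finset.sum_mul, add_mul, sub_mul, Finset.sum_add_distrib, Finset.sum_sub_distrib]
  ring

end ConnHeat
namespace ConnHeat
open Finset Matrix
variable {d : ℕ} {g : ℝ → (Fin d → ℝ) → Matrix (Fin d) (Fin d) ℝ} {t : ℝ}

lemma sum_delta_mul (m : Fin d) (f : Fin d → ℝ) :
    ∑ ν, (if m = ν then (1:ℝ) else 0) * f ν = f m := by simp

lemma sum_mul_pull (u : Fin d → ℝ) (v : Fin d → Fin d → ℝ) (w : Fin d → ℝ) :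
    (∑ ν, u ν * ∑ s, v ν s * w s) = ∑ s, (∑ ν, u ν * v ν s) * w s := by
  simp only [Finset.mul_sum, Finset.sum_mul]
  rw [Finset.sum_comm]
  exact Finset.sum_congr rfl fun s _ => Finset.sum_congr rfl fun ν _ => by ring

lemma sum_mul_pull' (u w : Fin d → ℝ) (v : Fin d → Fin d → ℝ) :
    (∑ ν, u ν * ∑ s, w s * v ν s) = ∑ s, (∑ ν, u ν * v ν s) * w s := by
  rw [show (∑ ν, u ν * ∑ s, w s * v ν s) = ∑ ν, u ν * ∑ s, v ν s * w s from
    Finset.sum_congr rfl fun ν _ => by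
      rw [Finset.sum_congr rfl fun s (_ : s ∈ Finset.univ) => mul_comm (w s) (v ν s)]]
  exact sum_mul_pull u v w

lemma gl_chrUp (hg_inv : ∀ x, IsUnit (g t x).det) (x : Fin d → ℝ) (m p q : Fin d) :
    ∑ ν, g t x m ν * tChrUp g t ν p q x = tChrLow g t p q m x := by
  unfold tChrUp
  rw [sum_mul_pull (fun ν => g t x m ν) (fun ν s => tgInvEntry g t ν s x)
    (fun s => tChrLow g t p q s x)]
  simp only [mul_inv_entry hg_inv]
  exact sum_delta_mul m _

lemma gl_spd_gu (hg_inv : ∀ x, IsUnit (g t x).det)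
    (hg_smooth : ∀ α β, ContDiff ℝ (⊤ : ℕ∞) (fun x => g t x α β))
    (x : Fin d → ℝ) (b m ρ : Fin d) :
    ∑ ν, g t x m ν * spd (fun y => tgInvEntry g t ν ρ y) b x
      = -∑ q, spd (tgEntry g t m q) b x * tgInvEntry g t q ρ x := by
  have h1 : ∀ ν : Fin d, spd (fun y => tgInvEntry g t ν ρ y) b x
      = -∑ p, tgInvEntry g t ν p x * ∑ q, spd (tgEntry g t p q) b x * tgInvEntry g t q ρ x := by
    intro ν
    rw [spd_gu hg_inv hg_smooth]
    congr 1
    refine Finset.sum_congr rfl fun p _ => ?_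
    rw [Finset.mul_sum]
    exact Finset.sum_congr rfl fun q _ => by ring
  calc ∑ ν, g t x m ν * spd (fun y => tgInvEntry g t ν ρ y) b x
      = ∑ ν, -(g t x m ν * ∑ p, tgInvEntry g t ν p x
          * ∑ q, spd (tgEntry g t p q) b x * tgInvEntry g t q ρ x) := by
        refine Finset.sum_congr rfl fun ν _ => ?_
        rw [h1 ν, mul_neg]
    _ = -(∑ ν, g t x m ν * ∑ p, tgInvEntry g t ν p x
          * ∑ q, spd (tgEntry g t p q) b x * tgInvEntry g t q ρ x) := by
        rw [Finset.sum_neg_distrib]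
    _ = -∑ q, spd (tgEntry g t m q) b x * tgInvEntry g t q ρ x := by
        rw [sum_mul_pull (fun ν => g t x m ν) (fun ν p => tgInvEntry g t ν p x)
          (fun p => ∑ q, spd (tgEntry g t p q) b x * tgInvEntry g t q ρ x)]
        simp only [mul_inv_entry hg_inv]
        rw [sum_delta_mul m (fun p => ∑ q, spd (tgEntry g t p q) b x * tgInvEntry g t q ρ x)]

lemma gl_spd_chrUp (hg_inv : ∀ x, IsUnit (g t x).det)
    (hg_smooth : ∀ α β, ContDiff ℝ (⊤ : ℕ∞) (fun x => g t x α β))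
    (x : Fin d → ℝ) (b m p q : Fin d) :
    ∑ ν, g t x m ν * spd (fun y => tChrUp g t ν p q y) b x
      = spd (tChrLow g t p q m) b x
        - ∑ ρ, spd (tgEntry g t m ρ) b x * tChrUp g t ρ p q x := by
  have dgu : ∀ ν s, DifferentiableAt ℝ (fun y => tgInvEntry g t ν s y) x := fun ν s =>
    (cd_gu hg_inv hg_smooth ν s).differentiable (by simp) x
  have dcl : ∀ s, DifferentiableAt ℝ (fun y => tChrLow g t p q s y) x := fun s =>
    (cd_chrLow hg_smooth p q s).differentiable (by simp) x
  have hs : ∀ ν : Fin d, spd (fun y => tChrUp g t ν p q y) b x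
      = ∑ s, (spd (fun y => tgInvEntry g t ν s y) b x * tChrLow g t p q s x
          + tgInvEntry g t ν s x * spd (tChrLow g t p q s) b x) := by
    intro ν
    rw [show (fun y => tChrUp g t ν p q y)
        = fun y => ∑ s, tgInvEntry g t ν s y * tChrLow g t p q s y from rfl]
    rw [spd_sum (fun s _ => (dgu ν s).fun_mul (dcl s)) b]
    exact Finset.sum_congr rfl fun s _ => spd_mul (dgu ν s) (dcl s) b
  simp only [hs, Finset.mul_sum, mul_add, Finset.sum_add_distrib]
  have hT2 : (∑ ν, ∑ s, g t x m ν * (tgInvEntry g t ν s x * spd (tChrLow g t p q s) b x))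
      = spd (tChrLow g t p q m) b x := by
    rw [show (∑ ν, ∑ s, g t x m ν * (tgInvEntry g t ν s x * spd (tChrLow g t p q s) b x))
        = ∑ ν, g t x m ν * ∑ s, tgInvEntry g t ν s x * spd (tChrLow g t p q s) b x from
      Finset.sum_congr rfl fun ν _ => by rw [Finset.mul_sum]]
    rw [sum_mul_pull (fun ν => g t x m ν) (fun ν s => tgInvEntry g t ν s x)
      (fun s => spd (tChrLow g t p q s) b x)]
    simp only [mul_inv_entry hg_inv]
    exact sum_delta_mul m _
  have hT1 : (∑ ν, ∑ s, g t x m ν * (spd (fun y => tgInvEntry g t ν s y) b x * tChrLow g t p q s x))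
      = -∑ ρ, spd (tgEntry g t m ρ) b x * tChrUp g t ρ p q x := by
    calc (∑ ν, ∑ s, g t x m ν * (spd (fun y => tgInvEntry g t ν s y) b x * tChrLow g t p q s x))
        = ∑ s, (∑ ν, g t x m ν * spd (fun y => tgInvEntry g t ν s y) b x) * tChrLow g t p q s x := by
          rw [Finset.sum_comm]
          refine Finset.sum_congr rfl fun s _ => ?_
          rw [Finset.sum_mul]
          exact Finset.sum_congr rfl fun ν _ => by ring
      _ = ∑ s, (-∑ q', spd (tgEntry g t m q') b x * tgInvEntry g t q' s x) * tChrLow g t p q s x := by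
          refine Finset.sum_congr rfl fun s _ => ?_
          rw [gl_spd_gu hg_inv hg_smooth x b m s]
      _ = -∑ s, ∑ q', spd (tgEntry g t m q') b x * tgInvEntry g t q' s x * tChrLow g t p q s x := by
          rw [← Finset.sum_neg_distrib]
          refine Finset.sum_congr rfl fun s _ => ?_
          rw [neg_mul, Finset.sum_mul]
      _ = -∑ ρ, spd (tgEntry g t m ρ) b x * tChrUp g t ρ p q x := by
          congr 1
          rw [Finset.sum_comm]
          refine Finset.sum_congr rfl fun ρ _ => ?_
          rw [show tChrUp g t ρ p q x = ∑ s, tgInvEntry g t ρ s x * tChrLow g t p q s x from rfl,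
            Finset.mul_sum]
          exact Finset.sum_congr rfl fun s _ => by ring
  rw [hT1, hT2]
  ring

lemma chr_exchange (hg_sym : ∀ x α β, g t x α β = g t x β α) (x : Fin d → ℝ) (u v p q : Fin d) :
    ∑ ρ, tChrUp g t ρ u v x * tChrLow g t p q ρ x
      = ∑ ρ, tChrUp g t ρ p q x * tChrLow g t u v ρ x := by
  unfold tChrUp
  simp only [Finset.sum_mul]
  rw [Finset.sum_comm]
  refine Finset.sum_congr rfl fun ρ _ => Finset.sum_congr rfl fun s _ => ?_
  rw [gu_symm hg_sym s ρ]
  ring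

lemma low_K (hg_sym : ∀ x α β, g t x α β = g t x β α)
    (hg_inv : ∀ x, IsUnit (g t x).det)
    (hg_smooth : ∀ α β, ContDiff ℝ (⊤ : ℕ∞) (fun x => g t x α β))
    (x : Fin d → ℝ) (m c a b : Fin d) :
    ∑ ν, g t x m ν * Kup g t ν c a b x = tRiemann g t m c b a x := by
  unfold Kup
  simp only [mul_sub, mul_add, Finset.sum_add_distrib, Finset.sum_sub_distrib, Finset.mul_sum]
  rw [gl_spd_chrUp hg_inv hg_smooth x b m a c, gl_spd_chrUp hg_inv hg_smooth x a m b c]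
  have hP3 : (∑ ν, ∑ ρ, g t x m ν * (tChrUp g t ρ a c x * tChrUp g t ν b ρ x))
      = ∑ ρ, tChrLow g t b ρ m x * tChrUp g t ρ a c x := by
    rw [show (∑ ν, ∑ ρ, g t x m ν * (tChrUp g t ρ a c x * tChrUp g t ν b ρ x))
        = ∑ ν, g t x m ν * ∑ ρ, tChrUp g t ρ a c x * tChrUp g t ν b ρ x from
      Finset.sum_congr rfl fun ν _ => by rw [Finset.mul_sum]]
    rw [sum_mul_pull' (fun ν => g t x m ν) (fun ρ => tChrUp g t ρ a c x)
      (fun ν ρ => tChrUp g t ν b ρ x)]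
    refine Finset.sum_congr rfl fun ρ _ => ?_
    rw [gl_chrUp hg_inv x m b ρ]
  have hP4 : (∑ ν, ∑ ρ, g t x m ν * (tChrUp g t ρ b c x * tChrUp g t ν a ρ x))
      = ∑ ρ, tChrLow g t a ρ m x * tChrUp g t ρ b c x := by
    rw [show (∑ ν, ∑ ρ, g t x m ν * (tChrUp g t ρ b c x * tChrUp g t ν a ρ x))
        = ∑ ν, g t x m ν * ∑ ρ, tChrUp g t ρ b c x * tChrUp g t ν a ρ x from
      Finset.sum_congr rfl fun ν _ => by rw [Finset.mul_sum]]
    rw [sum_mul_pull' (fun ν => g t x m ν) (fun ρ => tChrUp g t ρ b c x)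
      (fun ν ρ => tChrUp g t ν a ρ x)]
    refine Finset.sum_congr rfl fun ρ _ => ?_
    rw [gl_chrUp hg_inv x m a ρ]
  rw [hP3, hP4]
  have comp : ∀ (u : Fin d) (ρ : Fin d), tChrLow g t u ρ m x
      = spd (tgEntry g t m ρ) u x - tChrLow g t u m ρ x := by
    intro u ρ
    have := chrLow_compat hg_sym u ρ m x
    rw [tgEntry_symm hg_sym ρ m] at this
    linarith
  simp only [comp]
  have hex1 : (∑ ρ, tChrLow g t b m ρ x * tChrUp g t ρ a c x)
      = ∑ ρ, tChrUp g t ρ b m x * tChrLow g t a c ρ x := by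
    rw [show (∑ ρ, tChrLow g t b m ρ x * tChrUp g t ρ a c x)
        = ∑ ρ, tChrUp g t ρ a c x * tChrLow g t b m ρ x from
      Finset.sum_congr rfl fun ρ _ => by ring]
    rw [chr_exchange hg_sym x a c b m]
  have hex2 : (∑ ρ, tChrLow g t a m ρ x * tChrUp g t ρ b c x)
      = ∑ ρ, tChrUp g t ρ a m x * tChrLow g t b c ρ x := by
    rw [show (∑ ρ, tChrLow g t a m ρ x * tChrUp g t ρ b c x)
        = ∑ ρ, tChrUp g t ρ b c x * tChrLow g t a m ρ x from
      Finset.sum_congr rfl fun ρ _ => by ring]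
    rw [chr_exchange hg_sym x b c a m]
  simp only [sub_mul, Finset.sum_sub_distrib]
  rw [hex1, hex2]
  unfold tRiemann
  ring

end ConnHeat
namespace ConnHeat
open Finset Matrix
variable {d : ℕ} {g : ℝ → (Fin d → ℝ) → Matrix (Fin d) (Fin d) ℝ} {t : ℝ}

lemma chrLow_symm_fun (hg_sym : ∀ x α β, g t x α β = g t x β α) (α β : Fin d) :
    ∀ σ, tChrLow g t α β σ = tChrLow g t β α σ := fun σ =>
  funext fun x => chrLow_symm hg_sym α β σ x

lemma riem_antisym_last (σ γ α β : Fin d) (x : Fin d → ℝ) :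
    tRiemann g t σ γ α β x = -tRiemann g t σ γ β α x := by
  unfold tRiemann; ring

lemma riem_bianchi (hg_sym : ∀ x α β, g t x α β = g t x β α) (σ γ α β : Fin d)
    (x : Fin d → ℝ) :
    tRiemann g t σ γ α β x + tRiemann g t σ α β γ x + tRiemann g t σ β γ α x = 0 := by
  unfold tRiemann
  simp only [chrLow_symm_fun hg_sym γ α, chrLow_symm_fun hg_sym β α,
    chrLow_symm_fun hg_sym γ β]
  ring

lemma riem_antisym_first (hg_sym : ∀ x α β, g t x α β = g t x β α)
    (hg_inv : ∀ x, IsUnit (g t x).det)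
    (hg_smooth : ∀ α β, ContDiff ℝ (⊤ : ℕ∞) (fun x => g t x α β))
    (σ γ α β : Fin d) (x : Fin d → ℝ) :
    tRiemann g t σ γ α β x = -tRiemann g t γ σ α β x := by
  have dcl : ∀ a b c, DifferentiableAt ℝ (tChrLow g t a b c) x := fun a b c =>
    (cd_chrLow hg_smooth a b c).differentiable (by simp) x
  have key : ∀ a b : Fin d,
      spd (tChrLow g t a γ σ) b x + spd (tChrLow g t a σ γ) b x
        = spd (spd (tgEntry g t γ σ) a) b x := by
    intro a b
    rw [← spd_add (dcl a γ σ) (dcl a σ γ) b]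
    congr 1
    exact funext fun y => chrLow_compat hg_sym a γ σ y
  have e1 := key β α
  have e2 := key α β
  have hcomm : spd (spd (tgEntry g t γ σ) β) α x = spd (spd (tgEntry g t γ σ) α) β x :=
    spd_comm (u := tgEntry g t γ σ) (hg_smooth γ σ) β α x
  have ex1 := chr_exchange hg_sym x β σ α γ
  have ex2 := chr_exchange hg_sym x α σ β γ
  unfold tRiemann
  have hswap : ∀ u v p q : Fin d,
      (∑ m, tChrUp g t m u v x * tChrLow g t p q m x)
        = ∑ m, tChrUp g t m p q x * tChrLow g t u v m x := fun u v p q =>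
    chr_exchange hg_sym x u v p q
  linarith [e1, e2, hcomm, hswap β σ α γ, hswap α σ β γ]

lemma K_eq_riem (hg_sym : ∀ x α β, g t x α β = g t x β α)
    (hg_inv : ∀ x, IsUnit (g t x).det)
    (hg_smooth : ∀ α β, ContDiff ℝ (⊤ : ℕ∞) (fun x => g t x α β))
    (ν c a b : Fin d) (x : Fin d → ℝ) :
    Kup g t ν c a b x = ∑ τ, tgInvEntry g t ν τ x * tRiemann g t τ c b a x := by
  calc Kup g t ν c a b x
      = ∑ m, (if ν = m then (1:ℝ) else 0) * Kup g t m c a b x :=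
        (sum_delta_mul ν (fun m => Kup g t m c a b x)).symm
    _ = ∑ m, (∑ τ, tgInvEntry g t ν τ x * g t x τ m) * Kup g t m c a b x := by
        refine Finset.sum_congr rfl fun m _ => ?_
        rw [inv_mul_entry hg_inv x ν m]
    _ = ∑ τ, tgInvEntry g t ν τ x * ∑ m, g t x τ m * Kup g t m c a b x := by
        rw [sum_mul_pull (fun τ => tgInvEntry g t ν τ x) (fun τ m => g t x τ m)
          (fun m => Kup g t m c a b x)]
    _ = ∑ τ, tgInvEntry g t ν τ x * tRiemann g t τ c b a x := by
        refine Finset.sum_congr rfl fun τ _ => ?_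
        rw [low_K hg_sym hg_inv hg_smooth x τ c a b]

lemma gu_contract_zero_last (hg_sym : ∀ x α β, g t x α β = g t x β α) (τ α : Fin d)
    (x : Fin d → ℝ) :
    ∑ σ, ∑ μ, tgInvEntry g t σ μ x * tRiemann g t τ α μ σ x = 0 := by
  have h : (∑ σ, ∑ μ, tgInvEntry g t σ μ x * tRiemann g t τ α μ σ x)
      = -∑ σ, ∑ μ, tgInvEntry g t σ μ x * tRiemann g t τ α μ σ x := by
    nth_rewrite 1 [Finset.sum_comm]
    rw [← Finset.sum_neg_distrib]
    refine Finset.sum_congr rfl fun σ _ => ?_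
    rw [← Finset.sum_neg_distrib]
    refine Finset.sum_congr rfl fun μ _ => ?_
    rw [gu_symm hg_sym μ σ, riem_antisym_last (g := g) τ α σ μ]
    ring
  linarith [h]

lemma gu_contract_zero_first (hg_sym : ∀ x α β, g t x α β = g t x β α)
    (hg_inv : ∀ x, IsUnit (g t x).det)
    (hg_smooth : ∀ α β, ContDiff ℝ (⊤ : ℕ∞) (fun x => g t x α β)) (τ α : Fin d)
    (x : Fin d → ℝ) :
    ∑ σ, ∑ μ, tgInvEntry g t σ μ x * tRiemann g t σ μ τ α x = 0 := by
  have h : (∑ σ, ∑ μ, tgInvEntry g t σ μ x * tRiemann g t σ μ τ α x)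
      = -∑ σ, ∑ μ, tgInvEntry g t σ μ x * tRiemann g t σ μ τ α x := by
    nth_rewrite 1 [Finset.sum_comm]
    rw [← Finset.sum_neg_distrib]
    refine Finset.sum_congr rfl fun σ _ => ?_
    rw [← Finset.sum_neg_distrib]
    refine Finset.sum_congr rfl fun μ _ => ?_
    rw [gu_symm hg_sym μ σ, riem_antisym_first hg_sym hg_inv hg_smooth μ σ τ α x]
    ring
  linarith [h]

lemma S_eq_neg_ricci (hg_sym : ∀ x α β, g t x α β = g t x β α)
    (hg_inv : ∀ x, IsUnit (g t x).det)
    (hg_smooth : ∀ α β, ContDiff ℝ (⊤ : ℕ∞) (fun x => g t x α β)) (τ α : Fin d)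
    (x : Fin d → ℝ) :
    ∑ σ, ∑ μ, tgInvEntry g t σ μ x * tRiemann g t τ μ σ α x = -tRicci g t α τ x := by
  have sum2_congr : ∀ F G : Fin d → Fin d → ℝ, (∀ σ μ, F σ μ = G σ μ) →
      (∑ σ, ∑ μ, F σ μ) = ∑ σ, ∑ μ, G σ μ := fun F G h =>
    Finset.sum_congr rfl fun σ _ => Finset.sum_congr rfl fun μ _ => h σ μ
  have step1 : (∑ σ, ∑ μ, tgInvEntry g t σ μ x * tRiemann g t τ μ σ α x)
      = -(∑ σ, ∑ μ, tgInvEntry g t σ μ x * tRiemann g t τ σ α μ x)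
        - ∑ σ, ∑ μ, tgInvEntry g t σ μ x * tRiemann g t τ α μ σ x := by
    rw [sum2_congr _ (fun σ μ => -(tgInvEntry g t σ μ x * tRiemann g t τ σ α μ x)
        - tgInvEntry g t σ μ x * tRiemann g t τ α μ σ x) ?_]
    · simp only [Finset.sum_sub_distrib, Finset.sum_neg_distrib]
    · intro σ μ
      have hb := riem_bianchi hg_sym τ μ σ α x
      have : tRiemann g t τ μ σ α x = -tRiemann g t τ σ α μ x - tRiemann g t τ α μ σ x := by
        linarith
      rw [this]; ring
  rw [step1, gu_contract_zero_last hg_sym τ α x, sub_zero]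
  have step2 : (∑ σ, ∑ μ, tgInvEntry g t σ μ x * tRiemann g t τ σ α μ x)
      = -∑ σ, ∑ μ, tgInvEntry g t σ μ x * tRiemann g t σ τ α μ x := by
    rw [sum2_congr _ (fun σ μ => -(tgInvEntry g t σ μ x * tRiemann g t σ τ α μ x)) ?_]
    · simp only [Finset.sum_neg_distrib]
    · intro σ μ
      rw [riem_antisym_first hg_sym hg_inv hg_smooth τ σ α μ x]; ring
  rw [step2, neg_neg]
  have step3 : (∑ σ, ∑ μ, tgInvEntry g t σ μ x * tRiemann g t σ τ α μ x)
      = -(∑ σ, ∑ μ, tgInvEntry g t σ μ x * tRiemann g t σ α μ τ x)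
        - ∑ σ, ∑ μ, tgInvEntry g t σ μ x * tRiemann g t σ μ τ α x := by
    rw [sum2_congr _ (fun σ μ => -(tgInvEntry g t σ μ x * tRiemann g t σ α μ τ x)
        - tgInvEntry g t σ μ x * tRiemann g t σ μ τ α x) ?_]
    · simp only [Finset.sum_sub_distrib, Finset.sum_neg_distrib]
    · intro σ μ
      have hb := riem_bianchi hg_sym σ τ α μ x
      have : tRiemann g t σ τ α μ x = -tRiemann g t σ α μ τ x - tRiemann g t σ μ τ α x := by
        linarith
      rw [this]; ring
  rw [step3, gu_contract_zero_first hg_sym hg_inv hg_smooth τ α x, sub_zero]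
  have step4 : (∑ σ, ∑ μ, tgInvEntry g t σ μ x * tRiemann g t σ α μ τ x)
      = tRicci g t α τ x := by
    unfold tRicci
    rw [Finset.sum_comm]
    refine Finset.sum_congr rfl fun σ _ => Finset.sum_congr rfl fun μ _ => ?_
    rw [gu_symm hg_sym μ σ]
  rw [step4]

end ConnHeat
namespace ConnHeat
open Finset Matrix
variable {d : ℕ} {g : ℝ → (Fin d → ℝ) → Matrix (Fin d) (Fin d) ℝ}
  {lam : Fin d → Fin d → ℝ → (Fin d → ℝ) → ℂ}
  {A : ℝ → (Fin d → ℝ) → Fin d → ℝ} {t : ℝ}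

lemma contract_K (hg_sym : ∀ x α β, g t x α β = g t x β α)
    (hg_inv : ∀ x, IsUnit (g t x).det)
    (hg_smooth : ∀ α β, ContDiff ℝ (⊤ : ℕ∞) (fun x => g t x α β))
    (ν α : Fin d) (x : Fin d → ℝ) :
    ∑ σ, ∑ μ, tgInvEntry g t σ μ x * Kup g t ν μ α σ x
      = -∑ δ, tRicci g t α δ x * tgInvEntry g t δ ν x := by
  calc ∑ σ, ∑ μ, tgInvEntry g t σ μ x * Kup g t ν μ α σ x
      = ∑ σ, ∑ μ, ∑ τ, tgInvEntry g t ν τ x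
          * (tgInvEntry g t σ μ x * tRiemann g t τ μ σ α x) := by
        refine Finset.sum_congr rfl fun σ _ => Finset.sum_congr rfl fun μ _ => ?_
        rw [K_eq_riem hg_sym hg_inv hg_smooth ν μ α σ x, Finset.mul_sum]
        exact Finset.sum_congr rfl fun τ _ => by ring
    _ = ∑ τ, ∑ μ, ∑ σ, tgInvEntry g t ν τ x
          * (tgInvEntry g t σ μ x * tRiemann g t τ μ σ α x) :=
        sum_swap13 fun σ μ τ => tgInvEntry g t ν τ x
          * (tgInvEntry g t σ μ x * tRiemann g t τ μ σ α x)
    _ = ∑ τ, tgInvEntry g t ν τ x * ∑ σ, ∑ μ, tgInvEntry g t σ μ x * tRiemann g t τ μ σ α x := by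
        refine Finset.sum_congr rfl fun τ _ => ?_
        rw [Finset.mul_sum]
        rw [Finset.sum_comm]
        exact Finset.sum_congr rfl fun σ _ => by rw [Finset.mul_sum]
    _ = ∑ τ, tgInvEntry g t ν τ x * -tRicci g t α τ x := by
        refine Finset.sum_congr rfl fun τ _ => ?_
        rw [S_eq_neg_ricci hg_sym hg_inv hg_smooth τ α x]
    _ = -∑ δ, tRicci g t α δ x * tgInvEntry g t δ ν x := by
        rw [← Finset.sum_neg_distrib]
        refine Finset.sum_congr rfl fun δ _ => ?_
        rw [gu_symm hg_sym ν δ]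
        ring

lemma div_T
    (hg_sym : ∀ x α β, g t x α β = g t x β α)
    (hg_inv : ∀ x, IsUnit (g t x).det)
    (hg_smooth : ∀ α β, ContDiff ℝ (⊤ : ℕ∞) (fun x => g t x α β))
    (hA_smooth : ∀ α, ContDiff ℝ (⊤ : ℕ∞) (fun x => A t x α))
    (hcurl : ∀ x α β, tCovA g A t α β x - tCovA g A t β α x = tTT g lam t β α x)
    (α : Fin d) (x : Fin d → ℝ) :
    ∑ σ, ∑ μ, tgInvEntry g t σ μ x * (tCov2A g A t σ α μ x - tCov2A g A t σ μ α x)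
      = tCovDivT g lam t α x := by
  have dcov : ∀ ν ρ, DifferentiableAt ℝ (fun y => tCovA g A t ν ρ y) x := fun ν ρ =>
    (cd_covA hg_inv hg_smooth hA_smooth ν ρ).differentiable (by simp) x
  have pointwise : ∀ σ a b : Fin d,
      tCov2A g A t σ a b x - tCov2A g A t σ b a x
        = spd (fun y => tTT g lam t b a y) σ x
          - ∑ ν, tChrUp g t ν σ a x * tTT g lam t b ν x
          - ∑ ν, tChrUp g t ν σ b x * tTT g lam t ν a x := by
    intro σ a b
    rw [show tCov2A g A t σ a b x
        = spd (fun y => tCovA g A t a b y) σ x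
          - ∑ ν, tChrUp g t ν σ a x * tCovA g A t ν b x
          - ∑ ν, tChrUp g t ν σ b x * tCovA g A t a ν x from rfl,
      show tCov2A g A t σ b a x
        = spd (fun y => tCovA g A t b a y) σ x
          - ∑ ν, tChrUp g t ν σ b x * tCovA g A t ν a x
          - ∑ ν, tChrUp g t ν σ a x * tCovA g A t b ν x from rfl]
    have hspd : spd (fun y => tCovA g A t a b y) σ x - spd (fun y => tCovA g A t b a y) σ x
        = spd (fun y => tTT g lam t b a y) σ x := by
      rw [← spd_sub (dcov a b) (dcov b a) σ]
      congr 1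
      exact funext fun y => hcurl y a b
    have h1 : (∑ ν, tChrUp g t ν σ a x * tCovA g A t ν b x)
          - (∑ ν, tChrUp g t ν σ a x * tCovA g A t b ν x)
        = ∑ ν, tChrUp g t ν σ a x * tTT g lam t b ν x := by
      rw [← Finset.sum_sub_distrib]
      refine Finset.sum_congr rfl fun ν _ => ?_
      rw [← mul_sub, hcurl x ν b]
    have h2 : (∑ ν, tChrUp g t ν σ b x * tCovA g A t a ν x)
          - (∑ ν, tChrUp g t ν σ b x * tCovA g A t ν a x)
        = ∑ ν, tChrUp g t ν σ b x * tTT g lam t ν a x := by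
      rw [← Finset.sum_sub_distrib]
      refine Finset.sum_congr rfl fun ν _ => ?_
      rw [← mul_sub, hcurl x a ν]
    linarith [hspd, h1, h2]
  simp only [pointwise]
  rw [show tCovDivT g lam t α x
      = ∑ σ, ∑ μ, tgInvEntry g t σ μ x *
          (spd (fun y => tTT g lam t σ α y) μ x
            - ∑ ν, tChrUp g t ν μ σ x * tTT g lam t ν α x
            - ∑ ν, tChrUp g t ν μ α x * tTT g lam t σ ν x) from rfl]
  rw [Finset.sum_comm]
  refine Finset.sum_congr rfl fun σ _ => Finset.sum_congr rfl fun μ _ => ?_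
  rw [gu_symm hg_sym μ σ]
  ring

end ConnHeat

/-- in the heat gauge `∇^α A_α = B`, the curvature relations
`∇_α A_β − ∇_β A_α = Im(λ^γ_α conj(λ_{βγ}))` and
`∂_t A_α − ∂_α B = Re(λ_α^γ conj(∂^A_γ ψ)) − Im(λ^γ_α conj(λ_{γσ})) V^σ`
imply the parabolic equation
`(∂_t − ∇_σ∇^σ) A_α = ∇^σ Im(λ^γ_α conj(λ_{σγ})) − Ric_{αδ} A^δ
  + Re(λ^γ_α conj(∇^A_γ ψ)) − Im(λ^γ_α conj(λ_{γσ})) V^σ`. -/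
theorem connection_heat_equation (d : ℕ) (hd : 2 ≤ d)
    (g : ℝ → (Fin d → ℝ) → Matrix (Fin d) (Fin d) ℝ)
    (lam : Fin d → Fin d → ℝ → (Fin d → ℝ) → ℂ)
    (A : ℝ → (Fin d → ℝ) → Fin d → ℝ)
    (hg_sym : ∀ t x α β, g t x α β = g t x β α)
    (hlam_sym : ∀ α β, lam α β = lam β α)
    (hg_inv : ∀ t x, IsUnit (g t x).det)
    (hg_smooth : ∀ t α β, ContDiff ℝ (⊤ : ℕ∞) (fun x => g t x α β))
    (hA_smooth : ∀ t α, ContDiff ℝ (⊤ : ℕ∞) (fun x => A t x α))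
    (hA_t : ∀ x α, Differentiable ℝ (fun t => A t x α))
    -- the Ricci (curvature) relation for `A`
    (hcurl : ∀ t x α β,
      tCovA g A t α β x - tCovA g A t β α x =
        (∑ γ, tLamUp g lam t α γ x * (starRingEnd ℂ) (lam β γ t x)).im)
    -- the temporal curvature relation for `A` and `B = ∇^α A_α`
    (htime : ∀ t x α,
      deriv (fun s => A s x α) t - spd (fun y => tBgauge g A t y) α x =
        (∑ γ, tLamUp g lam t α γ x *
            (starRingEnd ℂ) (tCovPsi g lam A t γ x)).re
          - ∑ σ, (∑ γ, tLamUp g lam t α γ x *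
              (starRingEnd ℂ) (lam γ σ t x)).im * tVup g t σ x) :
    ∀ t x α,
      deriv (fun s => A s x α) t
          - ∑ σ, ∑ μ, tgInvEntry g t σ μ x * tCov2A g A t σ μ α x =
        tCovDivT g lam t α x
          - ∑ δ, tRicci g t α δ x * (∑ γ, tgInvEntry g t δ γ x * A t x γ)
          + (∑ γ, tLamUp g lam t α γ x *
              (starRingEnd ℂ) (tCovPsi g lam A t γ x)).re
          - ∑ σ, (∑ γ, tLamUp g lam t α γ x *
              (starRingEnd ℂ) (lam γ σ t x)).im * tVup g t σ x := by
  intro t x α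
  have hgs : ∀ x α β, g t x α β = g t x β α := fun x a b => hg_sym t x a b
  have hgi : ∀ x, IsUnit (g t x).det := hg_inv t
  have hgsm : ∀ α β, ContDiff ℝ (⊤ : ℕ∞) (fun x => g t x α β) := hg_smooth t
  have hAs : ∀ α, ContDiff ℝ (⊤ : ℕ∞) (fun x => A t x α) := hA_smooth t
  have hcurl' : ∀ x a b, tCovA g A t a b x - tCovA g A t b a x = tTT g lam t b a x :=
    fun x a b => hcurl t x a b
  have ht := htime t x α
  have h1 := ConnHeat.spd_B hgs hgi hgsm hAs α x
  have h3 := ConnHeat.div_T hgs hgi hgsm hAs hcurl' α x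
  have h4 : (∑ σ, ∑ μ, tgInvEntry g t σ μ x * (tCov2A g A t α σ μ x - tCov2A g A t σ α μ x))
      = -∑ δ, tRicci g t α δ x * (∑ γ, tgInvEntry g t δ γ x * A t x γ) := by
    calc (∑ σ, ∑ μ, tgInvEntry g t σ μ x * (tCov2A g A t α σ μ x - tCov2A g A t σ α μ x))
        = ∑ σ, ∑ μ, ∑ ν, (tgInvEntry g t σ μ x * ConnHeat.Kup g t ν μ α σ x) * A t x ν := by
          refine Finset.sum_congr rfl fun σ _ => Finset.sum_congr rfl fun μ _ => ?_
          rw [ConnHeat.cov2_comm hgs hgi hgsm hAs α σ μ x, Finset.mul_sum]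
          exact Finset.sum_congr rfl fun ν _ => by ring
      _ = ∑ ν, ∑ μ, ∑ σ, (tgInvEntry g t σ μ x * ConnHeat.Kup g t ν μ α σ x) * A t x ν :=
          ConnHeat.sum_swap13 fun σ μ ν =>
            (tgInvEntry g t σ μ x * ConnHeat.Kup g t ν μ α σ x) * A t x ν
      _ = ∑ ν, (∑ σ, ∑ μ, tgInvEntry g t σ μ x * ConnHeat.Kup g t ν μ α σ x) * A t x ν := by
          refine Finset.sum_congr rfl fun ν _ => ?_
          rw [Finset.sum_mul, Finset.sum_comm]
          exact Finset.sum_congr rfl fun σ _ => by rw [Finset.sum_mul]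
      _ = ∑ ν, (-∑ δ, tRicci g t α δ x * tgInvEntry g t δ ν x) * A t x ν := by
          refine Finset.sum_congr rfl fun ν _ => ?_
          rw [ConnHeat.contract_K hgs hgi hgsm ν α x]
      _ = -∑ ν, ∑ δ, tRicci g t α δ x * tgInvEntry g t δ ν x * A t x ν := by
          rw [← Finset.sum_neg_distrib]
          refine Finset.sum_congr rfl fun ν _ => ?_
          rw [neg_mul, Finset.sum_mul]
      _ = -∑ δ, tRicci g t α δ x * (∑ γ, tgInvEntry g t δ γ x * A t x γ) := by
          congr 1
          rw [Finset.sum_comm]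
          refine Finset.sum_congr rfl fun δ _ => ?_
          rw [Finset.mul_sum]
          exact Finset.sum_congr rfl fun γ _ => by ring
  have hsplit : (∑ σ, ∑ μ, tgInvEntry g t σ μ x * tCov2A g A t α σ μ x)
        - (∑ σ, ∑ μ, tgInvEntry g t σ μ x * tCov2A g A t σ μ α x)
      = (∑ σ, ∑ μ, tgInvEntry g t σ μ x * (tCov2A g A t α σ μ x - tCov2A g A t σ α μ x))
        + (∑ σ, ∑ μ, tgInvEntry g t σ μ x * (tCov2A g A t σ α μ x - tCov2A g A t σ μ α x)) := by
    simp only [mul_sub, Finset.sum_sub_distrib, Finset.sum_add_distrib]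
    ring
  linarith [ht, h1, h3, h4, hsplit]

end
end
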